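/- arXiv:2410.15958 — 6 statements merged into one kernel-verified Lean document; each statement's English description precedes it below -/
import Mathlib

section
/- For any nonempty string T, the ratio el(T)/er(T) is at most σ, where σ is the number of distinct letters occurring in T, and el(T), er(T) denote the total number of left and right extensions of maximal repeats of T, respectively. Equivalently, el(T) ≤ σ · er(T). -/
/-! The inequality holds summand by summand: a maximal repeat has at most `σ` left extensions,
since each is a letter of `T`, and at least one right extension, since the earlier of two
occurrences of it is followed by a letter of `T`. -/

open Finset

variable {α : Type*}

/-- Number of occurrences of `S` in `T`: positions `i` with `T[i..i+|S|-1] = S`. -/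
def occ [DecidableEq α] (T S : List α) : ℕ :=
  ((Finset.range (T.length + 1)).filter fun i => (T.drop i).take S.length = S).card

/-- `S` is a maximal repeat of `T`. -/
def MaxRepeat [DecidableEq α] (T S : List α) : Prop :=
  2 ≤ occ T S ∧ ∀ a : α, occ T (a :: S) < occ T S ∧ occ T (S ++ [a]) < occ T S

instance [DecidableEq α] [Fintype α] (T S : List α) : Decidable (MaxRepeat T S) := by
  unfold MaxRepeat; infer_instance

/-- The finite set of maximal repeats of `T`. -/
def MRset [DecidableEq α] [Fintype α] (T : List α) : Finset (List α) :=
  (T.tails.flatMap List.inits).toFinset.filter fun S => MaxRepeat T S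

/-- Number of right extensions of `S` in `T`. -/
def rext [DecidableEq α] [Fintype α] (T S : List α) : ℕ :=
  (Finset.univ.filter fun a : α => (S ++ [a]) <:+: T).card

/-- Number of left extensions of `S` in `T`. -/
def lext [DecidableEq α] [Fintype α] (T S : List α) : ℕ :=
  (Finset.univ.filter fun a : α => (a :: S) <:+: T).card

/-- Total number of right extensions of maximal repeats of `T`. -/
def er [DecidableEq α] [Fintype α] (T : List α) : ℕ := ∑ S ∈ MRset T, rext T S

/-- Total number of left extensions of maximal repeats of `T`. -/
def el [DecidableEq α] [Fintype α] (T : List α) : ℕ := ∑ S ∈ MRset T, lext T S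

lemma lext_le_card_toFinset [DecidableEq α] [Fintype α] (T S : List α) :
    lext T S ≤ T.toFinset.card :=
  Finset.card_le_card fun a ha =>
    List.mem_toFinset.mpr ((Finset.mem_filter.mp ha).2.subset List.mem_cons_self)

lemma exists_append_singleton_infix {T S : List α} {i : ℕ} (hlen : i + S.length < T.length)
    (hi : (T.drop i).take S.length = S) : ∃ a, S ++ [a] <:+: T := by
  have hlt : S.length < (T.drop i).length := by rw [List.length_drop]; omega
  refine ⟨(T.drop i)[S.length], ?_⟩
  have htake : (T.drop i).take (S.length + 1) = S ++ [(T.drop i)[S.length]] := by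
    rw [← List.take_append_getElem hlt, hi]
  rw [← htake]
  exact (List.take_prefix _ _).isInfix.trans (List.drop_suffix i T).isInfix

lemma exists_append_singleton_infix_of_two_le_occ [DecidableEq α] {T S : List α}
    (h2 : 2 ≤ occ T S) : ∃ a, S ++ [a] <:+: T := by
  obtain ⟨i, hi, j, hj, hij⟩ := Finset.one_lt_card.mp (Nat.succ_le_iff.mp h2)
  simp only [Finset.mem_filter, Finset.mem_range] at hi hj
  have fits {k : ℕ} (hk : k < T.length + 1 ∧ (T.drop k).take S.length = S) :
      k + S.length ≤ T.length := by
    have := congrArg List.length hk.2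
    simp only [List.length_take, List.length_drop] at this
    omega
  rcases hij.lt_or_gt with hlt | hlt
  · exact exists_append_singleton_infix (by have := fits hj; omega) hi.2
  · exact exists_append_singleton_infix (by have := fits hi; omega) hj.2

lemma rext_pos_of_two_le_occ [DecidableEq α] [Fintype α] {T S : List α}
    (h2 : 2 ≤ occ T S) : 0 < rext T S := by
  obtain ⟨a, ha⟩ := exists_append_singleton_infix_of_two_le_occ h2
  exact Finset.card_pos.mpr ⟨a, Finset.mem_filter.mpr ⟨Finset.mem_univ a, ha⟩⟩

theorem el_le_sigma_mul_er_general [DecidableEq α] [Fintype α] (T : List α) :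
    el T ≤ T.toFinset.card * er T := by
  rw [el, er, Finset.mul_sum]
  refine Finset.sum_le_sum fun S hS => ?_
  have hrep : MaxRepeat T S := (Finset.mem_filter.mp hS).2
  calc lext T S ≤ T.toFinset.card := lext_le_card_toFinset T S
    _ ≤ T.toFinset.card * rext T S := Nat.le_mul_of_pos_right _ (rext_pos_of_two_le_occ hrep.1)

/-- `el(T) ≤ σ · er(T)` where `σ` is the number of distinct letters of `T`. -/
theorem el_le_sigma_mul_er [DecidableEq α] [Fintype α] (T : List α) (h : T ≠ []) :
    el T ≤ T.toFinset.card * er T :=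
  el_le_sigma_mul_er_general T
end

section
/- For any string T of length n, the total number of left extensions of maximal repeats of T satisfies el(T) < 2n, and symmetrically the total number of right extensions satisfies er(T) < 2n. -/
set_option linter.unusedSectionVars false
set_option linter.unusedVariables false
open Finset

variable {α : Type*}

section Bs
variable [DecidableEq α]

/-- positions of occurrences of `S` in `T` -/
def Bs (T S : List α) : Finset ℕ :=
  (Finset.range (T.length + 1)).filter fun i => (T.drop i).take S.length = S

lemma occ_eq_card (T S : List α) : occ T S = (Bs T S).card := rfl

lemma mem_Bs {T S : List α} {i : ℕ} : i ∈ Bs T S ↔ i ≤ T.length ∧ S <+: T.drop i := by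
  constructor
  · rintro hi
    simp only [Bs, Finset.mem_filter, Finset.mem_range, Nat.lt_succ_iff] at hi
    exact ⟨hi.1, hi.2 ▸ List.take_prefix _ _⟩
  · rintro ⟨h1, h2⟩
    simp only [Bs, Finset.mem_filter, Finset.mem_range, Nat.lt_succ_iff]
    exact ⟨h1, ((List.prefix_iff_eq_take.mp h2)).symm⟩

lemma add_length_le_of_mem_Bs {T S : List α} {i : ℕ} (h : i ∈ Bs T S) :
    i + S.length ≤ T.length := by
  obtain ⟨h1, h2⟩ := mem_Bs.mp h
  have := h2.length_le
  rw [List.length_drop] at this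
  omega

lemma Bs_subset_of_prefix {T S S' : List α} (h : S <+: S') : Bs T S' ⊆ Bs T S := by
  intro i hi
  rw [mem_Bs] at hi ⊢
  exact ⟨hi.1, h.trans hi.2⟩

lemma Bs_empty (T : List α) : Bs T [] = Finset.range (T.length + 1) := by
  ext i; simp [Bs]

lemma Bs_nonempty_iff_infix {T S : List α} : (Bs T S).Nonempty ↔ S <:+: T := by
  constructor
  · rintro ⟨i, hi⟩
    rw [mem_Bs] at hi
    exact hi.2.isInfix.trans (List.drop_suffix i T).isInfix
  · rintro ⟨s, t, hst⟩
    refine ⟨s.length, mem_Bs.mpr ⟨?_, ?_⟩⟩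
    · subst hst; simp
    · subst hst
      rw [List.append_assoc, List.drop_left]
      exact ⟨t, rfl⟩

lemma occ_pos_iff_infix {T S : List α} : 0 < occ T S ↔ S <:+: T := by
  rw [occ_eq_card, Finset.card_pos, Bs_nonempty_iff_infix]

lemma Bs_disjoint {T S : List α} {a b : α} (hab : a ≠ b) :
    Disjoint (Bs T (S ++ [a])) (Bs T (S ++ [b])) := by
  rw [Finset.disjoint_left]
  intro i ha hb
  obtain ⟨-, ha⟩ := mem_Bs.mp ha
  obtain ⟨-, hb⟩ := mem_Bs.mp hb
  have h1 := List.prefix_iff_eq_take.mp ha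
  have h2 := List.prefix_iff_eq_take.mp hb
  simp only [List.length_append, List.length_singleton] at h1 h2
  rw [← h2] at h1
  have := List.append_inj_right h1 rfl
  simp only [List.cons.injEq] at this
  exact hab this.1

end Bs

section Struct
variable [DecidableEq α]

lemma exists_snoc_prefix {S S' : List α} (h : S <+: S') (hne : S ≠ S') :
    ∃ a, S ++ [a] <+: S' := by
  obtain ⟨t, rfl⟩ := h
  match t with
  | [] => simp at hne
  | a :: t => exact ⟨a, t, by simp⟩

lemma Bs_comparable {T S S' : List α} {i : ℕ} (h : i ∈ Bs T S) (h' : i ∈ Bs T S') :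
    S <+: S' ∨ S' <+: S :=
  List.prefix_or_prefix_of_prefix (mem_Bs.mp h).2 (mem_Bs.mp h').2

lemma Bs_nonempty_of_MR {T S : List α} (h : MaxRepeat T S) : (Bs T S).Nonempty := by
  rw [← Finset.card_pos, ← occ_eq_card]
  have := h.1; omega

lemma exists_ext_of_subset {T S S' : List α} (hS : MaxRepeat T S) (hS' : MaxRepeat T S')
    (hsub : Bs T S' ⊆ Bs T S) (hne : S' ≠ S) :
    ∃ a, Bs T S' ⊆ Bs T (S ++ [a]) := by
  obtain ⟨i, hi⟩ := Bs_nonempty_of_MR hS'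
  rcases Bs_comparable (hsub hi) hi with hc | hc
  · obtain ⟨a, ha⟩ := exists_snoc_prefix hc (fun e => hne e.symm)
    exact ⟨a, fun j hj => Bs_subset_of_prefix ha hj⟩
  · obtain ⟨a, ha⟩ := exists_snoc_prefix hc hne
    exfalso
    have h1 : Bs T S ⊆ Bs T (S' ++ [a]) := Bs_subset_of_prefix ha
    have h2 : occ T S' ≤ occ T (S' ++ [a]) := by
      rw [occ_eq_card, occ_eq_card]
      exact Finset.card_le_card (hsub.trans h1)
    exact absurd h2 (not_le.mpr (hS'.2 a).2)

lemma Bs_injOn_MR {T S S' : List α} (hS : MaxRepeat T S) (hS' : MaxRepeat T S')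
    (heq : Bs T S = Bs T S') : S = S' := by
  by_contra hne
  obtain ⟨a, ha⟩ := exists_ext_of_subset hS' hS (heq ▸ le_refl _) hne
  have h1 : occ T S ≤ occ T (S' ++ [a]) := Finset.card_le_card ha
  have h2 : occ T (S' ++ [a]) ≤ occ T S' := Finset.card_le_card (Bs_subset_of_prefix (List.prefix_append _ _))
  have h3 : occ T S = occ T S' := by rw [occ_eq_card, occ_eq_card, heq]
  have := (hS'.2 a).2
  omega

end Struct

section Count
/-- Abstract counting: `ER` indexes disjoint nonempty "parts" `P a ⊆ U`; `C` indexes disjoint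
"children" `Q c` each contained in some part, with weights `w c ≤ 2|Q c| - 2`. -/
lemma count_core {β γ : Type*} [DecidableEq β] [DecidableEq γ]
    (ER : Finset β) (P : β → Finset ℕ) (C : Finset γ) (Q : γ → Finset ℕ) (w : γ → ℕ)
    (U : Finset ℕ)
    (hPU : ∀ a ∈ ER, P a ⊆ U)
    (hPne : ∀ a ∈ ER, (P a).Nonempty)
    (hPdis : ∀ a ∈ ER, ∀ b ∈ ER, a ≠ b → Disjoint (P a) (P b))
    (hQdis : ∀ c ∈ C, ∀ d ∈ C, c ≠ d → Disjoint (Q c) (Q d))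
    (hQsub : ∀ c ∈ C, ∃ a ∈ ER, Q c ⊆ P a)
    (hw : ∀ c ∈ C, w c + 2 ≤ 2 * (Q c).card) :
    (2 ≤ U.card → (∀ a ∈ ER, (P a).card + 1 ≤ U.card) →
        ER.card + ∑ c ∈ C, w c + 2 ≤ 2 * U.card) ∧
    (1 ≤ U.card → ER.card + ∑ c ∈ C, w c + 1 ≤ 2 * U.card) := by
  classical
  have hEsum : ∑ a ∈ ER, (P a).card ≤ U.card := by
    rw [← Finset.card_biUnion hPdis]
    exact Finset.card_le_card (Finset.biUnion_subset.mpr hPU)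
  have hkE : ER.card ≤ ∑ a ∈ ER, (P a).card := by
    calc ER.card = ∑ _a ∈ ER, 1 := by simp
    _ ≤ _ := Finset.sum_le_sum fun a ha => (hPne a ha).card_pos
  rcases C.eq_empty_or_nonempty with rfl | hC
  · constructor
    · intro hm _; simp only [Finset.sum_empty, add_zero]; omega
    · intro hm; simp only [Finset.sum_empty, add_zero]; omega
  · -- C nonempty
    obtain ⟨c₀, hc₀⟩ := hC
    obtain ⟨a₀, ha₀, -⟩ := hQsub c₀ hc₀
    set f : γ → β := fun c => if h : ∃ a ∈ ER, Q c ⊆ P a then h.choose else a₀ with hf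
    have hfspec : ∀ c ∈ C, f c ∈ ER ∧ Q c ⊆ P (f c) := by
      intro c hc
      have h := hQsub c hc
      simp only [hf, dif_pos h]
      exact ⟨h.choose_spec.1, h.choose_spec.2⟩
    set A := C.image f with hA
    have hAE : A ⊆ ER := by
      intro a ha
      obtain ⟨c, hc, rfl⟩ := Finset.mem_image.mp ha
      exact (hfspec c hc).1
    have htC : A.card ≤ C.card := Finset.card_image_le
    have htk : A.card ≤ ER.card := Finset.card_le_card hAE
    have ht1 : 1 ≤ A.card := Finset.card_pos.mpr (⟨f c₀, Finset.mem_image_of_mem f hc₀⟩)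
    -- q ≤ s
    have hq : ∑ c ∈ C, (Q c).card ≤ ∑ a ∈ A, (P a).card := by
      rw [← Finset.card_biUnion hQdis]
      calc (C.biUnion Q).card ≤ (A.biUnion P).card := by
            apply Finset.card_le_card
            apply Finset.biUnion_subset.mpr
            intro c hc
            exact (hfspec c hc).2.trans
              (Finset.subset_biUnion_of_mem P (Finset.mem_image_of_mem f hc))
        _ ≤ ∑ a ∈ A, (P a).card := Finset.card_biUnion_le
    -- s + k ≤ |U| + t
    have hs : ∑ a ∈ A, (P a).card + ER.card ≤ U.card + A.card := by
      have h1 : ∑ a ∈ ER, (P a).card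
          = ∑ a ∈ A, (P a).card + ∑ a ∈ ER \ A, (P a).card := by
        rw [add_comm, Finset.sum_sdiff hAE]
      have h2 : ER.card - A.card ≤ ∑ a ∈ ER \ A, (P a).card := by
        calc ER.card - A.card = (ER \ A).card := (Finset.card_sdiff_of_subset hAE).symm
          _ = ∑ _a ∈ ER \ A, 1 := by simp
          _ ≤ _ := Finset.sum_le_sum fun a ha =>
              (hPne a (Finset.mem_sdiff.mp ha).1).card_pos
      omega
    have hW : ∑ c ∈ C, w c + 2 * C.card ≤ 2 * ∑ c ∈ C, (Q c).card := by
      calc ∑ c ∈ C, w c + 2 * C.card = ∑ c ∈ C, (w c + 2) := by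
            rw [Finset.sum_add_distrib]; simp [mul_comm]
        _ ≤ ∑ c ∈ C, 2 * (Q c).card := Finset.sum_le_sum hw
        _ = 2 * ∑ c ∈ C, (Q c).card := by rw [Finset.mul_sum]
    constructor
    · intro hm hProper
      -- case k = 1 vs k ≥ 2
      rcases Nat.lt_or_ge ER.card 2 with hk | hk
      · -- k ≤ 1, so k = 1 (t ≥ 1, t ≤ k), A = ER
        have hAeq : A = ER := Finset.eq_of_subset_of_card_le hAE (by omega)
        have hsP : ∑ a ∈ A, (P a).card + A.card ≤ A.card * U.card := by
          calc ∑ a ∈ A, (P a).card + A.card = ∑ a ∈ A, ((P a).card + 1) := by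
                rw [Finset.sum_add_distrib]; simp
            _ ≤ ∑ _a ∈ A, U.card := Finset.sum_le_sum fun a ha =>
                hProper a (hAeq ▸ ha)
            _ = A.card * U.card := by rw [Finset.sum_const, smul_eq_mul]
        have hk1 : ER.card = 1 := by omega
        have ht1' : A.card = 1 := by omega
        rw [ht1', one_mul] at hsP
        omega
      · omega
    · intro hm
      omega

end Count


section Main
variable [DecidableEq α] [Fintype α]

lemma mem_MRset {T S : List α} : S ∈ MRset T ↔ MaxRepeat T S := by
  rw [MRset, Finset.mem_filter]
  constructor
  · exact fun h => h.2
  · intro h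
    refine ⟨?_, h⟩
    rw [List.mem_toFinset, List.mem_flatMap]
    have : S <:+: T := occ_pos_iff_infix.mp (by have := h.1; omega)
    obtain ⟨t, hp, hs⟩ := List.infix_iff_prefix_suffix.mp this
    exact ⟨t, (List.mem_tails _ _).mpr hs, (List.mem_inits _ _).mpr hp⟩

def gg (T S : List α) : ℕ :=
  ∑ S' ∈ (MRset T).filter (fun S' => Bs T S' ⊆ Bs T S), rext T S'

lemma er_eq_gg_nil (T : List α) : er T = gg T [] := by
  unfold er gg
  congr 1
  rw [Finset.filter_true_of_mem]
  intro S hS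
  rw [Bs_empty]
  intro i hi
  exact Finset.mem_range.mpr ((Finset.mem_filter.mp hi).1 |> Finset.mem_range.mp)

lemma gg_decomp {T S : List α} (hS : MaxRepeat T S) :
    ∃ C : Finset (List α),
      (∀ c ∈ C, MaxRepeat T c ∧ Bs T c ⊂ Bs T S) ∧
      (∀ c₁ ∈ C, ∀ c₂ ∈ C, c₁ ≠ c₂ → Disjoint (Bs T c₁) (Bs T c₂)) ∧
      gg T S = rext T S + ∑ c ∈ C, gg T c := by
  classical
  set D := (MRset T).filter (fun S' => Bs T S' ⊂ Bs T S) with hD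
  set C := D.filter (fun c => ∀ d ∈ D, ¬ Bs T c ⊂ Bs T d) with hC
  have hDmem : ∀ d, d ∈ D ↔ MaxRepeat T d ∧ Bs T d ⊂ Bs T S := by
    intro d; rw [hD, Finset.mem_filter, mem_MRset]
  have hCmem : ∀ c ∈ C, MaxRepeat T c ∧ Bs T c ⊂ Bs T S := by
    intro c hc; exact (hDmem c).mp (Finset.mem_filter.mp hc).1
  -- pairwise disjoint on C
  have hCdis : ∀ c₁ ∈ C, ∀ c₂ ∈ C, c₁ ≠ c₂ → Disjoint (Bs T c₁) (Bs T c₂) := by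
    intro c₁ hc₁ c₂ hc₂ hne
    rw [Finset.disjoint_left]
    intro i hi₁ hi₂
    rcases Bs_comparable hi₁ hi₂ with hp | hp
    · have hsub := Bs_subset_of_prefix (T := T) hp
      -- Bs c₂ ⊆ Bs c₁
      rcases eq_or_lt_of_le (Finset.le_iff_subset.mpr hsub) with he | hlt
      · exact hne (Bs_injOn_MR (hCmem c₁ hc₁).1 (hCmem c₂ hc₂).1 he.symm)
      · exact ((Finset.mem_filter.mp hc₂).2 c₁ (Finset.mem_filter.mp hc₁).1) hlt
    · have hsub := Bs_subset_of_prefix (T := T) hp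
      rcases eq_or_lt_of_le (Finset.le_iff_subset.mpr hsub) with he | hlt
      · exact hne (Bs_injOn_MR (hCmem c₁ hc₁).1 (hCmem c₂ hc₂).1 he)
      · exact ((Finset.mem_filter.mp hc₁).2 c₂ (Finset.mem_filter.mp hc₂).1) hlt
  refine ⟨C, hCmem, hCdis, ?_⟩
  -- first split off S itself
  have hSmem : S ∈ MRset T := mem_MRset.mpr hS
  have hfilter : (MRset T).filter (fun S' => Bs T S' ⊆ Bs T S) = insert S D := by
    ext S'
    rw [Finset.mem_filter, Finset.mem_insert, hDmem]
    constructor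
    · rintro ⟨hm, hsub⟩
      rcases eq_or_lt_of_le (Finset.le_iff_subset.mpr hsub) with he | hlt
      · exact Or.inl (Bs_injOn_MR (mem_MRset.mp hm) hS he)
      · exact Or.inr ⟨mem_MRset.mp hm, hlt⟩
    · rintro (rfl | ⟨hm, hlt⟩)
      · exact ⟨hSmem, subset_rfl⟩
      · exact ⟨mem_MRset.mpr hm, le_of_lt hlt⟩
  have hSnotD : S ∉ D := by
    rw [hDmem]; rintro ⟨-, h⟩; exact lt_irrefl _ h
  -- D = biUnion over C of fibers
  have hDbi : D = C.biUnion (fun c => (MRset T).filter (fun S' => Bs T S' ⊆ Bs T c)) := by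
    apply Finset.Subset.antisymm
    · intro d hd
      -- find a maximal element above d
      set M := D.filter (fun d' => Bs T d ⊆ Bs T d') with hM
      have hdM : d ∈ M := Finset.mem_filter.mpr ⟨hd, subset_rfl⟩
      obtain ⟨c, hcM, hcmax⟩ := M.exists_max_image (fun d' => (Bs T d').card) ⟨d, hdM⟩
      have hcD : c ∈ D := (Finset.mem_filter.mp hcM).1
      have hcC : c ∈ C := by
        rw [hC, Finset.mem_filter]
        refine ⟨hcD, ?_⟩
        intro e heD hlt
        have heM : e ∈ M := Finset.mem_filter.mpr
          ⟨heD, (Finset.mem_filter.mp hcM).2.trans (le_of_lt hlt)⟩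
        have := hcmax e heM
        have := Finset.card_lt_card hlt
        omega
      refine Finset.mem_biUnion.mpr ⟨c, hcC, ?_⟩
      exact Finset.mem_filter.mpr ⟨((hDmem d).mp hd).1 |> mem_MRset.mpr,
        (Finset.mem_filter.mp hcM).2⟩
    · apply Finset.biUnion_subset.mpr
      intro c hc
      intro S' hS'
      obtain ⟨hm, hsub⟩ := Finset.mem_filter.mp hS'
      rw [hDmem]
      exact ⟨mem_MRset.mp hm, lt_of_le_of_lt (Finset.le_iff_subset.mpr hsub)
        (hCmem c hc).2⟩
  -- fibers pairwise disjoint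
  have hfibdis : ∀ c₁ ∈ C, ∀ c₂ ∈ C, c₁ ≠ c₂ →
      Disjoint ((MRset T).filter (fun S' => Bs T S' ⊆ Bs T c₁))
        ((MRset T).filter (fun S' => Bs T S' ⊆ Bs T c₂)) := by
    intro c₁ hc₁ c₂ hc₂ hne
    rw [Finset.disjoint_left]
    intro S' h1 h2
    obtain ⟨hm1, hsub1⟩ := Finset.mem_filter.mp h1
    obtain ⟨-, hsub2⟩ := Finset.mem_filter.mp h2
    obtain ⟨i, hi⟩ := Bs_nonempty_of_MR (mem_MRset.mp hm1)
    exact Finset.disjoint_left.mp (hCdis c₁ hc₁ c₂ hc₂ hne) (hsub1 hi) (hsub2 hi)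
  rw [gg, hfilter, Finset.sum_insert hSnotD, hDbi, Finset.sum_biUnion]
  · rfl
  · intro c₁ hc₁ c₂ hc₂ hne
    exact hfibdis c₁ hc₁ c₂ hc₂ hne

end Main

section Induct
variable [DecidableEq α] [Fintype α]

lemma gg_le (T : List α) : ∀ (n : ℕ) (S : List α), (Bs T S).card ≤ n → MaxRepeat T S →
    gg T S + 2 ≤ 2 * (Bs T S).card := by
  intro n
  induction n with
  | zero =>
    intro S hcard hS
    have := (Bs_nonempty_of_MR hS).card_pos
    omega
  | succ n ih =>
    intro S hcard hS
    obtain ⟨C, hCmem, hCdis, hdec⟩ := gg_decomp hS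
    have key := count_core (Finset.univ.filter fun a : α => (S ++ [a]) <:+: T)
      (fun a => Bs T (S ++ [a])) C (Bs T) (gg T) (Bs T S)
      (fun a _ => Bs_subset_of_prefix (List.prefix_append S [a]))
      (fun a ha => Bs_nonempty_iff_infix.mpr (Finset.mem_filter.mp ha).2)
      (fun a _ b _ hab => Bs_disjoint hab)
      hCdis
      ?_ ?_
    · have hm : 2 ≤ (Bs T S).card := by have := hS.1; rw [occ_eq_card] at this; omega
      have hProper : ∀ a ∈ Finset.univ.filter fun a : α => (S ++ [a]) <:+: T,
          (Bs T (S ++ [a])).card + 1 ≤ (Bs T S).card := by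
        intro a _
        have := (hS.2 a).2
        rw [occ_eq_card, occ_eq_card] at this
        omega
      have := key.1 hm hProper
      rw [hdec]
      have hrext : rext T S = (Finset.univ.filter fun a : α => (S ++ [a]) <:+: T).card := rfl
      omega
    · -- hQsub
      intro c hc
      obtain ⟨hcMR, hclt⟩ := hCmem c hc
      have hne : c ≠ S := by rintro rfl; exact lt_irrefl _ hclt
      obtain ⟨a, ha⟩ := exists_ext_of_subset hS hcMR (le_of_lt hclt) hne
      refine ⟨a, ?_, ha⟩
      refine Finset.mem_filter.mpr ⟨Finset.mem_univ a, ?_⟩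
      exact Bs_nonempty_iff_infix.mp ((Bs_nonempty_of_MR hcMR).mono ha)
    · -- hw via IH
      intro c hc
      obtain ⟨hcMR, hclt⟩ := hCmem c hc
      have : (Bs T c).card < (Bs T S).card := Finset.card_lt_card hclt
      exact ih c (by omega) hcMR

lemma MR_nil {T : List α} (h : T ≠ []) : MaxRepeat T [] := by
  have hn : 1 ≤ T.length := List.length_pos_iff.mpr h
  have h0 : occ T ([] : List α) = T.length + 1 := by
    rw [occ_eq_card, Bs_empty, Finset.card_range]
  have key : ∀ a : α, occ T [a] < occ T ([] : List α) := by
    intro a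
    have hsub : Bs T [a] ⊆ Finset.range T.length := by
      intro i hi
      have := add_length_le_of_mem_Bs hi
      simp only [List.length_singleton] at this
      exact Finset.mem_range.mpr (by omega)
    have hcard : occ T [a] ≤ T.length := by
      rw [occ_eq_card]
      calc (Bs T [a]).card ≤ (Finset.range T.length).card := Finset.card_le_card hsub
        _ = T.length := Finset.card_range _
    omega
  exact ⟨by omega, fun a => ⟨key a, key a⟩⟩

lemma er_lt (T : List α) (h : T ≠ []) : er T + 1 ≤ 2 * T.length := by
  have hn : 1 ≤ T.length := List.length_pos_iff.mpr h
  have hS := MR_nil (α := α) h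
  obtain ⟨C, hCmem, hCdis, hdec⟩ := gg_decomp hS
  have key := count_core (Finset.univ.filter fun a : α => (([] : List α) ++ [a]) <:+: T)
    (fun a => Bs T ([] ++ [a])) C (Bs T) (gg T) (Finset.range T.length)
    ?_
    (fun a ha => Bs_nonempty_iff_infix.mpr (Finset.mem_filter.mp ha).2)
    (fun a _ b _ hab => Bs_disjoint hab)
    hCdis
    ?_ ?_
  · have := key.2 (by rw [Finset.card_range]; omega)
    rw [Finset.card_range] at this
    rw [er_eq_gg_nil, hdec]
    have hrext : rext T ([] : List α)
        = (Finset.univ.filter fun a : α => (([] : List α) ++ [a]) <:+: T).card := rfl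
    omega
  · -- parts inside range T.length
    intro a _ i hi
    have := add_length_le_of_mem_Bs hi
    simp only [List.length_append, List.length_singleton, List.length_nil] at this
    exact Finset.mem_range.mpr (by omega)
  · intro c hc
    obtain ⟨hcMR, hclt⟩ := hCmem c hc
    have hne : c ≠ [] := by
      rintro rfl; exact lt_irrefl _ hclt
    obtain ⟨a, ha⟩ := exists_ext_of_subset hS hcMR (le_of_lt hclt) hne
    refine ⟨a, ?_, ha⟩
    refine Finset.mem_filter.mpr ⟨Finset.mem_univ a, ?_⟩
    exact Bs_nonempty_iff_infix.mp ((Bs_nonempty_of_MR hcMR).mono ha)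
  · intro c hc
    exact gg_le T (Bs T c).card c le_rfl (hCmem c hc).1

end Induct


section Rev
variable [DecidableEq α]

lemma mem_Bs_reverse {T S : List α} {i : ℕ} (h : i ∈ Bs T S) :
    T.length - S.length - i ∈ Bs T.reverse S.reverse := by
  have hle := add_length_le_of_mem_Bs h
  obtain ⟨h1, h2⟩ := mem_Bs.mp h
  rw [mem_Bs]
  constructor
  · rw [List.length_reverse]; omega
  · have hdrop : T.reverse.drop (T.length - S.length - i) = (T.take (i + S.length)).reverse := by
      rw [List.reverse_take]
      congr 1
      omega
    rw [hdrop, List.reverse_prefix]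
    have htake : T.take (i + S.length) = T.take i ++ S := by
      rw [List.take_add]
      congr 1
      exact (List.prefix_iff_eq_take.mp h2).symm
    rw [htake]
    exact ⟨T.take i, rfl⟩

lemma occ_reverse (T S : List α) : occ T S = occ T.reverse S.reverse := by
  rw [occ_eq_card, occ_eq_card]
  refine Finset.card_nbij' (fun i => T.length - S.length - i) (fun j => T.length - S.length - j)
    (fun i hi => mem_Bs_reverse hi) ?_ ?_ ?_
  · intro j hj
    have := mem_Bs_reverse hj
    simpa using this
  · intro i hi
    have := add_length_le_of_mem_Bs hi
    simp only []
    omega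
  · intro j hj
    have := add_length_le_of_mem_Bs hj
    rw [List.length_reverse, List.length_reverse] at this
    simp only []
    omega

lemma MaxRepeat.rev {T S : List α} (h : MaxRepeat T S) : MaxRepeat T.reverse S.reverse := by
  have e3 : occ T.reverse S.reverse = occ T S := (occ_reverse T S).symm
  constructor
  · have := h.1; omega
  · intro a
    have e1 : occ T.reverse (a :: S.reverse) = occ T (S ++ [a]) := by
      have := occ_reverse T (S ++ [a])
      simp only [List.reverse_append, List.reverse_singleton, List.singleton_append] at this
      exact this.symm
    have e2 : occ T.reverse (S.reverse ++ [a]) = occ T (a :: S) := by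
      have := occ_reverse T (a :: S)
      simp only [List.reverse_cons] at this
      exact this.symm
    have h1 := (h.2 a).1
    have h2 := (h.2 a).2
    omega

end Rev

section Final
variable [DecidableEq α] [Fintype α]

lemma MRset_reverse (T : List α) : MRset T.reverse = (MRset T).image List.reverse := by
  ext S
  simp only [mem_MRset, Finset.mem_image]
  constructor
  · intro hS
    refine ⟨S.reverse, ?_, List.reverse_reverse S⟩
    have := hS.rev
    rwa [List.reverse_reverse] at this
  · rintro ⟨x, hx, rfl⟩
    exact hx.rev

lemma el_eq_er_reverse (T : List α) : el T = er T.reverse := by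
  rw [el, er, MRset_reverse,
    Finset.sum_image (fun x _ y _ hxy => List.reverse_injective hxy)]
  apply Finset.sum_congr rfl
  intro S _
  rw [rext, lext]
  congr 1
  ext a
  simp only [Finset.mem_filter, Finset.mem_univ, true_and]
  rw [show S.reverse ++ [a] = (a :: S).reverse by simp, List.reverse_infix]

end Final

/-- `el(T) < 2n` and `er(T) < 2n`. -/
theorem el_er_lt_two_n [DecidableEq α] [Fintype α] (T : List α) (h : T ≠ []) :
    el T < 2 * T.length ∧ er T < 2 * T.length := by
  have h2 := er_lt T h
  have hrev : T.reverse ≠ [] := by simpa using h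
  have h1 := er_lt T.reverse hrev
  rw [List.length_reverse] at h1
  rw [el_eq_er_reverse]
  omega
end

section
/- For any string T of length n ≥ 2 over an alphabet with σ distinct letters occurring in T, el(T) ≤ (2n/σ) · er(T); i.e., σ · el(T) ≤ 2n · er(T). -/
open Finset

variable {α : Type*}

/-!
A member `A` of a laminar family of nonempty subsets of a finite linearly ordered set `U` is
charged to `inl (min A)` if no smaller member contains `min A`, and otherwise to `inr y`, where `y`
is the least point of `A` outside the largest smaller member through `min A`. Distinct members get
distinct charges, so the family has at most `2 |U|` members.

A left extension `a` of a maximal repeat `S` gives the set of end positions of `aS` in `T`, a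
nonempty subset of `{1, …, n}`. Words ending at a common position are suffix-comparable, so these
sets form a laminar family; and they are pairwise distinct, since if `aS` were a proper suffix of
`a'S'` then `S'` and `a'S'` would have the same occurrences, against the left-maximality of `S'`.
Hence `el(T) ≤ 2n`. The empty word is a maximal repeat of a nonempty `T`, with one right extension
per letter of `T`, so `σ ≤ er(T)`.
-/

section Laminar

variable {β : Type*}

def IsLaminar (F : Finset (Finset β)) : Prop :=
  ∀ A ∈ F, ∀ B ∈ F, A ⊆ B ∨ B ⊆ A ∨ Disjoint A B

def IsChildAt (F : Finset (Finset β)) (A : Finset β) (x : β) (C : Finset β) : Prop :=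
  C ∈ F ∧ C ⊂ A ∧ x ∈ C ∧ ∀ B ∈ F, B ⊂ A → x ∈ B → B ⊆ C

def Charge [LinearOrder β] (F : Finset (Finset β)) (A : Finset β) : β ⊕ β → Prop
  | .inl x => x ∈ A ∧ ∀ B ∈ F, B ⊂ A → x ∉ B
  | .inr y => ∃ x C, IsLeast (A : Set β) x ∧ IsChildAt F A x C ∧ IsLeast (↑(A \ C) : Set β) y

namespace IsLaminar

variable {F : Finset (Finset β)} {A B : Finset β} {x : β}

lemma subset_or_subset (hF : IsLaminar F) (hA : A ∈ F) (hB : B ∈ F) (hxA : x ∈ A)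
    (hxB : x ∈ B) : A ⊆ B ∨ B ⊆ A :=
  (hF A hA B hB).imp_right fun h => h.resolve_right (not_disjoint_iff.2 ⟨x, hxA, hxB⟩)

lemma exists_isChildAt (hF : IsLaminar F) (h : ∃ B ∈ F, B ⊂ A ∧ x ∈ B) :
    ∃ C, IsChildAt F A x C := by
  classical
  set S := F.filter fun B => B ⊂ A ∧ x ∈ B
  have hS : S.Nonempty := by
    obtain ⟨B, hB, hBA, hxB⟩ := h
    exact ⟨B, mem_filter.2 ⟨hB, hBA, hxB⟩⟩
  -- members of `S` share the point `x`, so they form a chain and `S` contains its union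
  have hmem : S.sup' hS id ∈ S := by
    refine sup'_mem (S : Set (Finset β)) ?_ S hS id fun B hB => hB
    intro B hB B' hB'
    obtain ⟨hBF, -, hxB⟩ := mem_filter.1 hB
    obtain ⟨hB'F, -, hxB'⟩ := mem_filter.1 hB'
    rcases hF.subset_or_subset hBF hB'F hxB hxB' with h | h
    · rwa [sup_eq_right.2 h]
    · rwa [sup_eq_left.2 h]
  obtain ⟨hCF, hCA, hxC⟩ := mem_filter.1 hmem
  exact ⟨_, hCF, hCA, hxC, fun B hB hBA hxB => le_sup' id (mem_filter.2 ⟨hB, hBA, hxB⟩)⟩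

variable [LinearOrder β]

lemma eq_of_isLeast_sdiff_child (hF : IsLaminar F) {A A' C C' : Finset β} {x x' y : β}
    (hA : A ∈ F) (hA' : A' ∈ F) (hx : IsLeast (A : Set β) x) (hx' : IsLeast (A' : Set β) x')
    (hC : IsChildAt F A x C) (hC' : IsChildAt F A' x' C')
    (hy : IsLeast (↑(A \ C) : Set β) y) (hy' : IsLeast (↑(A' \ C') : Set β) y) : A = A' := by
  obtain ⟨hyA, hyC⟩ := mem_sdiff.1 hy.1
  obtain ⟨hyA', hyC'⟩ := mem_sdiff.1 hy'.1
  wlog hAA' : A ⊆ A' generalizing A A' C C' x x'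
  · rcases hF.subset_or_subset hA hA' hyA hyA' with h | h
    · exact absurd h hAA'
    · exact (this hA' hA hx' hx hC' hC hy' hy hyA' hyC' hyA hyC h).symm
  by_contra hne
  by_cases hx'A : x' ∈ A
  · exact hyC' (hC'.2.2.2 A hA (ssubset_of_subset_of_ne hAA' hne) hx'A hyA)
  · have hxy : x < y := lt_of_le_of_ne (hx.2 hyA) (by rintro rfl; exact hyC hC.2.2.1)
    have hxC' : x ∉ C' := by
      intro hxC'
      rcases hF.subset_or_subset hA hC'.1 hx.1 hxC' with h | h
      · exact hyC' (h hyA)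
      · exact hx'A (h hC'.2.2.1)
    exact (hy'.2 (mem_sdiff.2 ⟨hAA' hx.1, hxC'⟩)).not_gt hxy

theorem card_le_two_mul_card (hF : IsLaminar F) (hne : ∀ A ∈ F, A.Nonempty) {U : Finset β}
    (hU : ∀ A ∈ F, A ⊆ U) : #F ≤ 2 * #U := by
  calc #F ≤ #(U.disjSum U) := card_le_card_of_forall_subsingleton (Charge F) ?_ ?_
    _ = 2 * #U := by rw [card_disjSum, two_mul]
  · intro A hA
    set x := A.min' (hne A hA)
    by_cases h : ∃ B ∈ F, B ⊂ A ∧ x ∈ B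
    · obtain ⟨C, hC⟩ := hF.exists_isChildAt h
      have hAC : (A \ C).Nonempty := sdiff_nonempty.2 (not_subset_of_ssubset hC.2.1)
      exact ⟨.inr ((A \ C).min' hAC), inr_mem_disjSum.2 (hU A hA (mem_sdiff.1 (min'_mem _ _)).1),
        x, C, isLeast_min' _ _, hC, isLeast_min' _ _⟩
    · push Not at h
      exact ⟨.inl x, inl_mem_disjSum.2 (hU A hA (min'_mem _ _)), min'_mem _ _, h⟩
  · rintro (x | y) -
    · rintro A ⟨hA, hxA, hAx⟩ A' ⟨hA', hxA', hA'x⟩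
      rcases hF.subset_or_subset hA hA' hxA hxA' with h | h
      · exact h.eq_of_not_ssubset fun hss => hA'x A hA hss hxA
      · exact (h.eq_of_not_ssubset fun hss => hAx A' hA' hss hxA').symm
    · rintro A ⟨hA, x, C, hx, hC, hy⟩ A' ⟨hA', x', C', hx', hC', hy'⟩
      exact hF.eq_of_isLeast_sdiff_child hA hA' hx hx' hC hC' hy hy'

end IsLaminar
end Laminar

lemma List.drop_take_eq_iff_suffix_take {T w : List α} {i : ℕ} (hi : i + w.length ≤ T.length) :
    (T.drop i).take w.length = w ↔ w <:+ T.take (i + w.length) := by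
  rw [List.suffix_iff_eq_drop, List.length_take, min_eq_left hi, Nat.add_sub_cancel,
    List.drop_take, Nat.add_sub_cancel_left, eq_comm]

section Strings

variable [DecidableEq α]

def Ends (T w : List α) : Finset ℕ :=
  (range (T.length + 1)).filter fun j => w <:+ T.take j

variable {T u v w : List α} {j : ℕ}

lemma mem_ends : j ∈ Ends T w ↔ j ≤ T.length ∧ w <:+ T.take j := by
  simp [Ends]

lemma length_le_of_mem_ends (hj : j ∈ Ends T w) : w.length ≤ j :=
  (mem_ends.1 hj).2.length_le.trans (List.length_take_le _ _)

lemma occ_eq_card_ends (T w : List α) : occ T w = #(Ends T w) := by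
  refine card_nbij' (· + w.length) (· - w.length) ?_ ?_ (fun i _ => Nat.add_sub_cancel i _)
    (fun j hj => Nat.sub_add_cancel (length_le_of_mem_ends hj))
  · intro i hi
    rw [mem_coe, mem_filter, mem_range] at hi
    have hle : i + w.length ≤ T.length := by
      have := congrArg List.length hi.2
      simp only [List.length_take, List.length_drop] at this
      omega
    exact mem_ends.2 ⟨hle, (List.drop_take_eq_iff_suffix_take hle).1 hi.2⟩
  · intro j hj
    dsimp only
    have hwj := length_le_of_mem_ends hj
    obtain ⟨hjT, hsuf⟩ := mem_ends.1 hj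
    have hle : j - w.length + w.length ≤ T.length := by omega
    rw [mem_coe, mem_filter, mem_range, List.drop_take_eq_iff_suffix_take hle,
      Nat.sub_add_cancel hwj]
    exact ⟨by omega, hsuf⟩

lemma ends_subset_of_suffix (h : u <:+ v) : Ends T v ⊆ Ends T u := fun _ hj =>
  mem_ends.2 ⟨(mem_ends.1 hj).1, h.trans (mem_ends.1 hj).2⟩

lemma ends_nonempty_of_infix (h : w <:+: T) : (Ends T w).Nonempty := by
  obtain ⟨s, t, rfl⟩ := h
  refine ⟨s.length + w.length, mem_ends.2 ⟨by simp, ?_⟩⟩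
  rw [← List.length_append, List.take_left]
  exact List.suffix_append _ _

lemma ends_subset_Icc (hw : w ≠ []) : Ends T w ⊆ Icc 1 T.length := fun _ hj =>
  mem_Icc.2 ⟨(List.length_pos_iff.2 hw).trans_le (length_le_of_mem_ends hj), (mem_ends.1 hj).1⟩

lemma isLaminar_image_ends {ι : Type*} (T : List α) (s : Finset ι) (f : ι → List α) :
    IsLaminar (s.image fun i => Ends T (f i)) := by
  simp only [IsLaminar, mem_image]
  rintro - ⟨i, -, rfl⟩ - ⟨i', -, rfl⟩
  by_cases hd : Disjoint (Ends T (f i)) (Ends T (f i'))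
  · exact Or.inr (Or.inr hd)
  obtain ⟨j, hj, hj'⟩ := not_disjoint_iff.1 hd
  exact ((List.suffix_or_suffix_of_suffix (mem_ends.1 hj).2 (mem_ends.1 hj').2).symm.imp
    ends_subset_of_suffix ends_subset_of_suffix).imp_right Or.inl

lemma MaxRepeat.cons_eq_of_ends_eq {S S' : List α} {a a' : α} (hS' : MaxRepeat T S')
    (hS : a :: S <:+: T) (he : Ends T (a :: S) = Ends T (a' :: S'))
    (hlen : S.length ≤ S'.length) : a :: S = a' :: S' := by
  obtain ⟨j, hj⟩ := ends_nonempty_of_infix hS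
  have hj' : j ∈ Ends T (a' :: S') := he ▸ hj
  obtain ⟨t, ht⟩ := List.suffix_of_suffix_length_le (mem_ends.1 hj).2 (mem_ends.1 hj').2
    (by simpa using hlen)
  cases t with
  | nil => exact ht
  | cons b t =>
    -- otherwise `a :: S` is a suffix of `S'`, so `S'` and `a' :: S'` end at the same positions
    have hsuf : a :: S <:+ S' := ⟨t, List.cons.inj ht |>.2⟩
    have hends : Ends T S' = Ends T (a' :: S') :=
      (he ▸ ends_subset_of_suffix hsuf).antisymm (ends_subset_of_suffix (List.suffix_cons a' S'))
    have := (hS'.2 a').1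
    rw [occ_eq_card_ends, occ_eq_card_ends, hends] at this
    exact absurd this (lt_irrefl _)

variable [Fintype α]

def leftExtensions (T : List α) : Finset (Σ _ : List α, α) :=
  (MRset T).sigma fun S => univ.filter fun a => a :: S <:+: T

lemma el_eq_card_leftExtensions (T : List α) : el T = #(leftExtensions T) := by
  rw [leftExtensions, card_sigma]
  rfl

lemma injOn_ends_leftExtensions (T : List α) :
    Set.InjOn (fun p : Σ _ : List α, α => Ends T (p.2 :: p.1)) (leftExtensions T) := by
  rintro ⟨S, a⟩ hp ⟨S', a'⟩ hq (he : Ends T (a :: S) = Ends T (a' :: S'))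
  simp only [leftExtensions, coe_sigma, Set.mem_sigma_iff, mem_coe, mem_filter, mem_univ,
    true_and, MRset] at hp hq
  have : a :: S = a' :: S' := by
    rcases le_total S.length S'.length with h | h
    · exact hq.1.2.cons_eq_of_ends_eq hp.2 he h
    · exact (hp.1.2.cons_eq_of_ends_eq hq.2 he.symm h).symm
  obtain ⟨rfl, rfl⟩ := List.cons.inj this
  rfl

theorem el_le_two_mul_length (T : List α) : el T ≤ 2 * T.length := by
  rw [el_eq_card_leftExtensions, ← card_image_of_injOn (injOn_ends_leftExtensions T)]
  calc _ ≤ 2 * #(Icc 1 T.length) := by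
        refine (isLaminar_image_ends T _ _).card_le_two_mul_card ?_ ?_ <;>
          simp only [mem_image] <;> rintro - ⟨⟨S, a⟩, hp, rfl⟩
        · simp only [leftExtensions, mem_sigma, mem_filter] at hp
          exact ends_nonempty_of_infix hp.2.2
        · exact ends_subset_Icc (List.cons_ne_nil _ _)
    _ = 2 * T.length := by simp

lemma nil_mem_MRset (hT : T ≠ []) : [] ∈ MRset T := by
  have hocc : ∀ a, occ T [a] < occ T [] := fun a => by
    rw [occ_eq_card_ends, occ_eq_card_ends]
    refine (card_le_card (ends_subset_Icc (List.cons_ne_nil a []))).trans_lt ?_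
    simp [Ends]
  refine mem_filter.2 ⟨List.mem_toFinset.2 (List.mem_flatMap.2 ⟨[], by simp, by simp⟩), ?_,
    fun a => ⟨hocc a, hocc a⟩⟩
  rw [occ_eq_card_ends]
  simpa [Ends, Nat.one_le_iff_ne_zero] using hT

lemma rext_nil (T : List α) : rext T [] = #T.toFinset := by
  rw [rext]
  congr 1
  ext a
  simp [List.singleton_infix_iff]

lemma card_toFinset_le_er (T : List α) : #T.toFinset ≤ er T := by
  rcases eq_or_ne T [] with rfl | hT
  · simp
  · rw [← rext_nil]
    exact single_le_sum (fun _ _ => Nat.zero_le _) (nil_mem_MRset hT)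

end Strings

theorem sigma_el_le_two_n_er_general [DecidableEq α] [Fintype α] (T : List α) :
    T.toFinset.card * el T ≤ 2 * T.length * er T :=
  calc T.toFinset.card * el T ≤ er T * (2 * T.length) :=
        Nat.mul_le_mul (card_toFinset_le_er T) (el_le_two_mul_length T)
    _ = 2 * T.length * er T := Nat.mul_comm _ _

/-- `σ · el(T) ≤ 2n · er(T)`. -/
theorem sigma_el_le_two_n_er [DecidableEq α] [Fintype α] (T : List α) (h : 2 ≤ T.length) :
    T.toFinset.card * el T ≤ 2 * T.length * er T :=
  sigma_el_le_two_n_er_general T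
end

section
/- Let k ≥ 2 and T_k = $_1 a_1 $_2 a_1 a_2 ⋯ $_k a_1 ⋯ a_k over 2k distinct letters. Then for each 1 ≤ i ≤ k−1, the maximal repeat a_1 a_2 ⋯ a_i has exactly two right extensions in T_k (namely $_{i+1} and a_{i+1}) and exactly k − i + 1 left extensions in T_k (namely $_i, $_{i+1}, ..., $_k). -/
open Finset

variable {α : Type*}

/-- The string `T_k = $_1 a_1 $_2 a_1 a_2 ⋯ $_k a_1 ⋯ a_k` over the alphabet
`Fin k ⊕ Fin k`, where `a_{i+1} = Sum.inl i` and `$_{i+1} = Sum.inr i`. -/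
def Tk (k : ℕ) : List (Fin k ⊕ Fin k) :=
  (List.finRange k).flatMap fun i =>
    Sum.inr i :: ((List.finRange k).take ((i : ℕ) + 1)).map Sum.inl

/-- The string `a_1 a_2 ⋯ a_i` over the alphabet `Fin k ⊕ Fin k`. -/
def Pk (k i : ℕ) : List (Fin k ⊕ Fin k) :=
  ((List.finRange k).take i).map Sum.inl

def Rk (k n : ℕ) : List (Fin k ⊕ Fin k) :=
  ((List.finRange k).drop n).flatMap fun i => Sum.inr i :: Pk k ((i:ℕ)+1)

lemma Rk_nil {k n : ℕ} (h : k ≤ n) : Rk k n = [] := by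
  have : List.drop n (List.finRange k) = [] := by
    apply List.drop_eq_nil_of_le; simpa using h
  simp [Rk, this]

lemma Rk_succ {k n : ℕ} (h : n < k) :
    Rk k n = (Sum.inr ⟨n, h⟩ :: Pk k (n+1)) ++ Rk k (n+1) := by
  unfold Rk
  rw [List.drop_eq_getElem_cons (by simpa using h)]
  simp [List.getElem_finRange]

lemma Pk_length {k m : ℕ} (h : m ≤ k) : (Pk k m).length = m := by
  simp [Pk, h]

lemma Pk_getElem {k m t : ℕ} (h : t < m) (h2 : m ≤ k) :
    (Pk k m)[t]'(by rw [Pk_length h2]; exact h) = Sum.inl ⟨t, lt_of_lt_of_le h h2⟩ := by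
  simp [Pk, List.getElem_finRange]

lemma Pk_eq_take {k a b : ℕ} (h : a ≤ b) : Pk k a = (Pk k b).take a := by
  simp [Pk, ← List.map_take, List.take_take, min_eq_left h]

lemma Pk_prefix {k a b : ℕ} (h : a ≤ b) : Pk k a <+: Pk k b := by
  rw [Pk_eq_take h]; exact List.take_prefix _ _

lemma Pk_succ {k m : ℕ} (h : m < k) :
    Pk k (m+1) = Pk k m ++ [Sum.inl ⟨m, h⟩] := by
  unfold Pk
  rw [List.take_succ]
  rw [List.getElem?_eq_getElem (l := List.finRange k) (by simpa using h)]
  simp [List.getElem_finRange]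

lemma Rk_exists_prefix (k : ℕ) : ∀ n, ∃ w, Rk k 0 = w ++ Rk k n := by
  intro n
  induction n with
  | zero => exact ⟨[], rfl⟩
  | succ n ih =>
    obtain ⟨w, hw⟩ := ih
    by_cases h : n < k
    · exact ⟨w ++ (Sum.inr ⟨n, h⟩ :: Pk k (n+1)), by
        rw [hw, Rk_succ h]; simp⟩
    · exact ⟨w, by rw [hw, Rk_nil (by omega), Rk_nil (by omega)]⟩

lemma lemA (k : ℕ) : ∀ d n u v (z : Fin k), k - n ≤ d →
    Rk k n = u ++ Sum.inl z :: v → (z : ℕ) = 0 →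
    ∃ j : Fin k, n ≤ (j : ℕ) ∧ (∃ u', u = u' ++ [Sum.inr j]) ∧
      Sum.inl z :: v = Pk k ((j : ℕ) + 1) ++ Rk k ((j : ℕ) + 1) := by
  intro d
  induction d with
  | zero =>
    intro n u v z hd heq hz
    rw [Rk_nil (by omega)] at heq
    exact absurd heq (by simp)
  | succ d ih =>
    intro n u v z hd heq hz
    by_cases hnk : n < k
    · rw [Rk_succ hnk] at heq
      match u with
      | [] => simp at heq
      | c :: u' =>
        rw [List.cons_append, List.cons_append] at heq
        obtain ⟨hc, heq⟩ := List.cons_eq_cons.mp heq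
        rcases List.append_eq_append_iff.mp heq with ⟨a', ha1, ha2⟩ | ⟨c', hc1, hc2⟩
        · -- occurrence lies beyond block n : use IH
          obtain ⟨j, hj1, ⟨u₂, hu₂⟩, htail⟩ := ih (n+1) a' v z (by omega) ha2 hz
          refine ⟨j, by omega, ⟨Sum.inr ⟨n, hnk⟩ :: (Pk k (n+1) ++ u₂), ?_⟩, htail⟩
          rw [← hc, ha1, hu₂]
          simp
        · -- occurrence starts inside block n
          match c' with
          | [] =>
            simp only [List.nil_append] at hc2
            by_cases h1 : n + 1 < k
            · rw [Rk_succ h1] at hc2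
              simp at hc2
            · rw [Rk_nil (by omega)] at hc2
              simp at hc2
          | y :: c'' =>
            obtain ⟨hy, hv⟩ := List.cons_eq_cons.mp hc2
            rw [← hy] at hc1
            have hlen : u'.length + (c''.length + 1) = n + 1 := by
              have := congrArg List.length hc1
              rw [Pk_length (by omega)] at this
              simp at this
              omega
            have hul : u'.length < n + 1 := by omega
            have h3 : (Pk k (n+1))[u'.length]'(by rw [Pk_length (by omega)]; exact hul)
                = Sum.inl ⟨u'.length, by omega⟩ := Pk_getElem hul (by omega)
            have h4 : (u' ++ Sum.inl z :: c'')[u'.length]'(by simp) = Sum.inl z := by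
              rw [List.getElem_append_right (le_refl _)]
              simp
            have h5 := (List.getElem_of_eq hc1 (by rw [Pk_length (by omega)]; exact hul)).symm.trans h3
            rw [h4] at h5
            have hu0 : u' = [] := by
              have hzz : (z : ℕ) = u'.length := by
                have := congrArg (fun x => match x with | Sum.inl a => (a:ℕ) | Sum.inr a => (a:ℕ)) h5
                simpa using this
              exact List.length_eq_zero_iff.mp (by omega)
            subst hu0
            simp only [List.nil_append] at hc1
            refine ⟨⟨n, hnk⟩, le_refl _, ⟨[], by simp [← hc]⟩, ?_⟩
            rw [hc1]
            simpa using hv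
    · rw [Rk_nil (by omega)] at heq
      exact absurd heq (by simp)

/-- in `T_k`, the maximal repeat `a_1 ⋯ a_i` (for `1 ≤ i ≤ k-1`) has
exactly the two right extensions `$_{i+1}, a_{i+1}` and exactly the `k-i+1` left
extensions `$_i, $_{i+1}, …, $_k`. -/
theorem extensions_Tk (k : ℕ) (hk : 2 ≤ k) (i : ℕ) (h1 : 1 ≤ i) (h2 : i ≤ k - 1) :
    (∀ c, (Pk k i ++ [c]) <:+: Tk k ↔
      c = Sum.inr (⟨i, by omega⟩ : Fin k) ∨ c = Sum.inl (⟨i, by omega⟩ : Fin k)) ∧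
    (∀ c, (c :: Pk k i) <:+: Tk k ↔ ∃ j : Fin k, i - 1 ≤ (j : ℕ) ∧ c = Sum.inr j) ∧
    rext (Tk k) (Pk k i) = 2 ∧ lext (Tk k) (Pk k i) = k - i + 1 := by
  have hik : i < k := by omega
  have hTk : Tk k = Rk k 0 := rfl
  -- head structure of Pk k i
  have hP1 : Pk k 1 = [Sum.inl (⟨0, by omega⟩ : Fin k)] := by
    rw [Pk_succ (show 0 < k by omega)]
    rfl
  obtain ⟨P', hP'⟩ := Pk_prefix (k := k) h1
  rw [hP1] at hP'
  -- hP' : [inl 0] ++ P' = Pk k i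
  -- occurrence analysis
  have occA : ∀ u w, Tk k = u ++ Pk k i ++ w →
      ∃ j : Fin k, i ≤ (j : ℕ) + 1 ∧ (∃ u', u = u' ++ [Sum.inr j]) ∧
        Pk k i ++ w = Pk k ((j : ℕ) + 1) ++ Rk k ((j : ℕ) + 1) := by
    intro u w h
    have h' : Rk k 0 = u ++ Sum.inl (⟨0, by omega⟩ : Fin k) :: (P' ++ w) := by
      rw [← hTk, h, ← hP']
      simp
    obtain ⟨j, _, hu, htail⟩ := lemA k k 0 u (P' ++ w) ⟨0, by omega⟩ (by omega) h' rfl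
    have hkey : Pk k i ++ w = Pk k ((j : ℕ) + 1) ++ Rk k ((j : ℕ) + 1) := by
      rw [← hP']
      simpa using htail
    refine ⟨j, ?_, hu, hkey⟩
    by_contra hcon
    push_neg at hcon
    -- (j:ℕ) + 1 < i
    obtain ⟨r, hr⟩ := Pk_prefix (k := k) (show (j : ℕ) + 1 + 1 ≤ i by omega)
    rw [Pk_succ (show (j : ℕ) + 1 < k by omega)] at hr
    rw [← hr] at hkey
    have := List.append_cancel_left (by simpa using hkey :
      Pk k ((j : ℕ) + 1) ++ (Sum.inl (⟨(j : ℕ) + 1, by omega⟩ : Fin k) :: (r ++ w)) =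
      Pk k ((j : ℕ) + 1) ++ Rk k ((j : ℕ) + 1))
    rw [Rk_succ (show (j : ℕ) + 1 < k by omega)] at this
    simp at this
  have part1 : ∀ c, (Pk k i ++ [c]) <:+: Tk k ↔
      c = Sum.inr (⟨i, by omega⟩ : Fin k) ∨ c = Sum.inl (⟨i, by omega⟩ : Fin k) := by
    intro c
    constructor
    · rintro ⟨u, v, huv⟩
      obtain ⟨j, hj, -, hkey⟩ := occA u (c :: v) (by rw [← huv]; simp)
      rcases Nat.lt_or_ge (i : ℕ) ((j : ℕ) + 1) with hlt | hge
      · -- i ≤ j : right extension is inl i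
        obtain ⟨r, hr⟩ := Pk_prefix (k := k) (show i + 1 ≤ (j : ℕ) + 1 by omega)
        rw [Pk_succ hik] at hr
        rw [← hr] at hkey
        have := List.append_cancel_left (by simpa using hkey :
          Pk k i ++ (c :: v) =
          Pk k i ++ (Sum.inl (⟨i, by omega⟩ : Fin k) :: (r ++ Rk k ((j : ℕ) + 1))))
        right
        exact (List.cons_eq_cons.mp this).1
      · -- i = j + 1 : right extension is inr i
        have hij : (j : ℕ) + 1 = i := by omega
        rw [hij] at hkey
        have := List.append_cancel_left hkey
        rw [Rk_succ hik] at this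
        left
        simpa using (List.cons_eq_cons.mp this).1
    · intro hc
      obtain ⟨w, hw⟩ := Rk_exists_prefix k (i - 1)
      have hi1k : i - 1 < k := by omega
      have hstep : Rk k (i - 1) = (Sum.inr ⟨i - 1, hi1k⟩ :: Pk k i) ++ Rk k i := by
        have := Rk_succ hi1k
        rwa [show i - 1 + 1 = i by omega] at this
      rcases hc with hc | hc
      · refine ⟨w ++ [Sum.inr ⟨i - 1, hi1k⟩], Pk k (i + 1) ++ Rk k (i + 1), ?_⟩
        rw [hTk, hw, hstep, Rk_succ hik, hc]
        simp
      · refine ⟨w ++ [Sum.inr ⟨i - 1, hi1k⟩] ++ Pk k i ++ [Sum.inr ⟨i, by omega⟩],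
          Rk k (i + 1), ?_⟩
        rw [hTk, hw, hstep, Rk_succ hik, hc, Pk_succ hik]
        simp
  have part2 : ∀ c, (c :: Pk k i) <:+: Tk k ↔
      ∃ j : Fin k, i - 1 ≤ (j : ℕ) ∧ c = Sum.inr j := by
    intro c
    constructor
    · rintro ⟨u, v, huv⟩
      obtain ⟨j, hj, ⟨u', hu'⟩, -⟩ := occA (u ++ [c]) v (by rw [← huv]; simp)
      obtain ⟨-, hc⟩ := List.append_inj' hu' rfl
      exact ⟨j, by omega, by simpa using hc⟩
    · rintro ⟨j, hj, rfl⟩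
      obtain ⟨w, hw⟩ := Rk_exists_prefix k (j : ℕ)
      obtain ⟨r, hr⟩ := Pk_prefix (k := k) (show i ≤ (j : ℕ) + 1 by omega)
      refine ⟨w, r ++ Rk k ((j : ℕ) + 1), ?_⟩
      rw [hTk, hw, Rk_succ j.isLt, ← hr]
      simp
  refine ⟨part1, part2, ?_, ?_⟩
  · unfold rext
    have hset : (Finset.univ.filter fun a => (Pk k i ++ [a]) <:+: Tk k) =
        {Sum.inr (⟨i, by omega⟩ : Fin k), Sum.inl (⟨i, by omega⟩ : Fin k)} := by
      ext a
      simp [part1 a]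
    rw [hset]
    rw [Finset.card_insert_of_notMem (by simp), Finset.card_singleton]
  · unfold lext
    have hset : (Finset.univ.filter fun a => (a :: Pk k i) <:+: Tk k) =
        (Finset.univ.filter fun j : Fin k => i - 1 ≤ (j : ℕ)).map
          ⟨Sum.inr, Sum.inr_injective⟩ := by
      ext a
      simp [part2 a, eq_comm]
    rw [hset, Finset.card_map]
    have : (Finset.univ.filter fun j : Fin k => i - 1 ≤ (j : ℕ)) =
        Finset.Ici (⟨i - 1, by omega⟩ : Fin k) := by
      ext j
      simp [Fin.le_def]
    rw [this, Fin.card_Ici]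
    show k - (i - 1) = k - i + 1
    omega
end

section
/- Let σ ≥ 2, k ≥ 2, and let T = b_1 a^k $ b_2 a^k $ ⋯ b_σ a^k $ over the alphabet {$, a, b_1, ..., b_σ} of σ+2 distinct letters, where a^k denotes k copies of a. Then the set of maximal repeats of T is exactly {ε, a, aa, ..., a^{k−1}, a^k $}. -/
open Finset

variable {α : Type*}

/-- Alphabet `{$, a, b_1, …, b_σ}` of size `σ + 2`. -/
abbrev Alph (σ : ℕ) := Unit ⊕ Unit ⊕ Fin σ

/-- The letter `$`. -/
def dol (σ : ℕ) : Alph σ := Sum.inl ()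

/-- The letter `a`. -/
def la (σ : ℕ) : Alph σ := Sum.inr (Sum.inl ())

/-- The letter `b_{j+1}`. -/
def lb (σ : ℕ) (j : Fin σ) : Alph σ := Sum.inr (Sum.inr j)

/-- The string `T = b_1 a^k $ b_2 a^k $ ⋯ b_σ a^k $`. -/
def W (σ k : ℕ) : List (Alph σ) :=
  (List.finRange σ).flatMap fun j =>
    lb σ j :: (List.replicate k (la σ) ++ [dol σ])

/-! Each letter `b_j` occurs once in `T`, so a repeat avoids it and has the form `a^i` or
`a^i $ R`; as `$` is always followed by some `b_j` or by the end of `T`, moreover `R = ε`.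
Counting block by block, `a^i` (`i ≥ 1`) occurs `σ (k + 1 - i)` times and `a^i $` occurs `σ`
times if `i ≤ k` and never otherwise; comparing these counts decides maximality. -/

open List (replicate)

section Occurrences

variable [DecidableEq α] {T S S' : List α}

theorem occ_eq_card_filter_prefix (T S : List α) :
    occ T S = ((range (T.length + 1)).filter fun i => S <+: T.drop i).card := by
  simp only [occ, List.prefix_iff_eq_take, eq_comm]

theorem occ_nil_left (S : List α) : occ [] S = if S = [] then 1 else 0 := by
  by_cases hS : S = [] <;> simp [occ, hS, eq_comm]

theorem occ_cons_left (t : α) (T S : List α) :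
    occ (t :: T) S = (if S <+: t :: T then 1 else 0) + occ T S := by
  simp only [occ_eq_card_filter_prefix, card_filter, List.length_cons,
    sum_range_succ' _ (T.length + 1), List.drop_succ_cons, List.drop_zero]
  omega

theorem occ_nil_right (T : List α) : occ T [] = T.length + 1 := by
  simp [occ]

theorem occ_le_length (T : List α) (hS : S ≠ []) : occ T S ≤ T.length := by
  induction T with
  | nil => simp [occ_nil_left, hS]
  | cons t T ih =>
    rw [occ_cons_left, List.length_cons]
    split_ifs <;> omega

theorem occ_le_of_prefix (T : List α) (h : S <+: S') : occ T S' ≤ occ T S := by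
  simp only [occ_eq_card_filter_prefix]
  exact card_le_card (monotone_filter_right _ fun _ _ => h.trans)

theorem occ_append_left_le (T u S : List α) : occ T (u ++ S) ≤ occ T S := by
  simp only [occ_eq_card_filter_prefix]
  refine card_le_card_of_injOn (· + u.length) (fun i hi => ?_)
    (fun _ _ _ _ => Nat.add_right_cancel)
  simp only [coe_filter, mem_range, Set.mem_ofPred_eq] at hi ⊢
  have hlen := hi.2.length_le
  simp only [List.length_append, List.length_drop] at hlen
  refine ⟨by omega, ?_⟩
  simpa [List.drop_drop, add_comm] using hi.2.drop u.length

theorem occ_le_of_infix (T : List α) (h : S <:+: S') : occ T S' ≤ occ T S := by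
  obtain ⟨u, v, rfl⟩ := h
  exact (occ_le_of_prefix T ⟨v, rfl⟩).trans (occ_append_left_le T u S)

theorem maxRepeat_nil (hT : T ≠ []) : MaxRepeat T [] := by
  have hlen : 0 < T.length := List.length_pos_iff.mpr hT
  have hsingle (a : α) : occ T [a] < occ T [] :=
    (occ_le_length T (List.cons_ne_nil a [])).trans_lt (by rw [occ_nil_right]; omega)
  exact ⟨by rw [occ_nil_right]; omega, fun a => ⟨hsingle a, hsingle a⟩⟩

theorem occ_cons_cons_of_ne {y t : α} (h : y ≠ t) (T S : List α) :
    occ (t :: T) (y :: S) = occ T (y :: S) := by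
  simp [occ_cons_left, h]

theorem occ_replicate_append_of_ne {y x : α} (h : y ≠ x) (m : ℕ) (T S : List α) :
    occ (replicate m x ++ T) (y :: S) = occ T (y :: S) := by
  induction m with
  | zero => rfl
  | succ m ih => rw [List.replicate_succ, List.cons_append, occ_cons_cons_of_ne h, ih]

end Occurrences

section Runs

variable {x c : α}

theorem replicate_prefix_replicate_append_cons_iff (hcx : c ≠ x) {i m : ℕ} {M : List α} :
    replicate i x <+: replicate m x ++ c :: M ↔ i ≤ m := by
  induction m generalizing i with
  | zero => cases i <;> simp [List.replicate_succ, hcx.symm]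
  | succ m ih => cases i <;> simp [List.replicate_succ, ih]

theorem replicate_append_singleton_prefix_iff (hcx : c ≠ x) {i m : ℕ} {M : List α} :
    replicate i x ++ [c] <+: replicate m x ++ c :: M ↔ i = m := by
  induction m generalizing i with
  | zero => cases i <;> simp [List.replicate_succ, hcx.symm]
  | succ m ih => cases i <;> simp [List.replicate_succ, hcx, ih]

variable [DecidableEq α]

theorem occ_replicate_append_cons_replicate (hcx : c ≠ x) {i : ℕ} (hi : 1 ≤ i) (m : ℕ)
    (M : List α) :
    occ (replicate m x ++ c :: M) (replicate i x) = (m + 1 - i) + occ M (replicate i x) := by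
  induction m with
  | zero =>
    have := replicate_prefix_replicate_append_cons_iff hcx (i := i) (m := 0) (M := M)
    rw [List.replicate_zero, List.nil_append] at this ⊢
    rw [occ_cons_left, if_neg (by rw [this]; omega)]
    omega
  | succ m ih =>
    have := replicate_prefix_replicate_append_cons_iff hcx (i := i) (m := m + 1) (M := M)
    rw [List.replicate_succ, List.cons_append] at this ⊢
    rw [occ_cons_left, ih, if_congr this rfl rfl]
    split_ifs <;> omega

theorem occ_replicate_append_cons_replicate_append (hcx : c ≠ x) (i m : ℕ) (M : List α) :
    occ (replicate m x ++ c :: M) (replicate i x ++ [c])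
      = (if i ≤ m then 1 else 0) + occ M (replicate i x ++ [c]) := by
  induction m with
  | zero =>
    have := replicate_append_singleton_prefix_iff hcx (i := i) (m := 0) (M := M)
    rw [List.replicate_zero, List.nil_append] at this ⊢
    rw [occ_cons_left, if_congr this rfl rfl]
    split_ifs <;> omega
  | succ m ih =>
    have := replicate_append_singleton_prefix_iff hcx (i := i) (m := m + 1) (M := M)
    rw [List.replicate_succ, List.cons_append] at this ⊢
    rw [occ_cons_left, ih, if_congr this rfl rfl]
    split_ifs <;> omega

end Runs

section Letters

variable {σ : ℕ}

theorem dol_ne_la : dol σ ≠ la σ := by simp [dol, la]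
theorem dol_ne_lb (j : Fin σ) : dol σ ≠ lb σ j := by simp [dol, lb]
theorem la_ne_lb (j : Fin σ) : la σ ≠ lb σ j := by simp [la, lb]

theorem lb_injective : Function.Injective (lb σ) := fun _ _ h => by simpa [lb] using h

theorem eq_dol_or_eq_la_or_eq_lb (c : Alph σ) :
    c = dol σ ∨ c = la σ ∨ ∃ j, c = lb σ j := by
  rcases c with ⟨⟨⟩⟩ | ⟨⟨⟩⟩ | j <;> simp [dol, la, lb]

end Letters

def blockWord (σ k : ℕ) (L : List (Fin σ)) : List (Alph σ) :=
  L.flatMap fun j => lb σ j :: (replicate k (la σ) ++ [dol σ])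

section BlockWord

variable {σ k : ℕ}

theorem blockWord_nil : blockWord σ k [] = [] := rfl

theorem blockWord_cons (j : Fin σ) (L : List (Fin σ)) :
    blockWord σ k (j :: L) = lb σ j :: (replicate k (la σ) ++ dol σ :: blockWord σ k L) := by
  simp [blockWord]

theorem occ_blockWord_replicate {i : ℕ} (hi : 1 ≤ i) (L : List (Fin σ)) :
    occ (blockWord σ k L) (replicate i (la σ)) = L.length * (k + 1 - i) := by
  obtain ⟨i, rfl⟩ := Nat.exists_eq_add_of_le' hi
  induction L with
  | nil => simp [blockWord_nil, occ_nil_left]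
  | cons j L ih =>
    rw [blockWord_cons, List.replicate_succ, occ_cons_cons_of_ne (la_ne_lb j),
      ← List.replicate_succ, occ_replicate_append_cons_replicate dol_ne_la hi, ih,
      List.length_cons]
    ring

theorem occ_blockWord_replicate_append_dol (i : ℕ) (L : List (Fin σ)) :
    occ (blockWord σ k L) (replicate i (la σ) ++ [dol σ])
      = if i ≤ k then L.length else 0 := by
  induction L with
  | nil => simp [blockWord_nil, occ_nil_left]
  | cons j L ih =>
    have hskip : ∀ M, occ (lb σ j :: M) (replicate i (la σ) ++ [dol σ])
        = occ M (replicate i (la σ) ++ [dol σ]) := by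
      cases i with
      | zero => exact fun M => occ_cons_cons_of_ne (dol_ne_lb j) M []
      | succ i => exact fun M => occ_cons_cons_of_ne (la_ne_lb j) M _
    rw [blockWord_cons, hskip, occ_replicate_append_cons_replicate_append dol_ne_la, ih,
      List.length_cons]
    split_ifs <;> omega

theorem occ_blockWord_lb (j : Fin σ) (L : List (Fin σ)) :
    occ (blockWord σ k L) [lb σ j] = L.count j := by
  induction L with
  | nil => simp [blockWord_nil, occ_nil_left]
  | cons j' L ih =>
    rw [blockWord_cons, occ_cons_left, occ_replicate_append_of_ne (la_ne_lb j).symm,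
      occ_cons_cons_of_ne (dol_ne_lb j).symm, ih, List.count_cons]
    simp only [List.cons_prefix_cons, lb_injective.eq_iff, List.nil_prefix, and_true, beq_iff_eq]
    rw [add_comm]
    exact congrArg _ (if_congr eq_comm rfl rfl)

theorem occ_blockWord_dol_cons {y : Alph σ} (hy : ∀ j, y ≠ lb σ j) (L : List (Fin σ)) :
    occ (blockWord σ k L) [dol σ, y] = 0 := by
  induction L with
  | nil => simp [blockWord_nil, occ_nil_left]
  | cons j L ih =>
    rw [blockWord_cons, occ_cons_cons_of_ne (dol_ne_lb j), occ_replicate_append_of_ne dol_ne_la,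
      occ_cons_left, ih]
    cases L with
    | nil => simp [blockWord_nil]
    | cons j' L => simp [blockWord_cons, hy j']

end BlockWord

section OccurrencesInW

variable {σ k : ℕ}

theorem W_eq_blockWord : W σ k = blockWord σ k (List.finRange σ) := rfl

theorem W_ne_nil (hσ : σ ≠ 0) : W σ k ≠ [] := by
  obtain ⟨s, rfl⟩ := Nat.exists_eq_succ_of_ne_zero hσ
  rw [W_eq_blockWord, List.finRange_succ, blockWord_cons]
  exact List.cons_ne_nil _ _

theorem occ_W_replicate {i : ℕ} (hi : 1 ≤ i) :
    occ (W σ k) (replicate i (la σ)) = σ * (k + 1 - i) := by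
  rw [W_eq_blockWord, occ_blockWord_replicate hi, List.length_finRange]

theorem occ_W_replicate_append_dol (i : ℕ) :
    occ (W σ k) (replicate i (la σ) ++ [dol σ]) = if i ≤ k then σ else 0 := by
  rw [W_eq_blockWord, occ_blockWord_replicate_append_dol, List.length_finRange]

theorem occ_W_le_one_of_lb_mem {S : List (Alph σ)} {j : Fin σ} (h : lb σ j ∈ S) :
    occ (W σ k) S ≤ 1 := by
  refine (occ_le_of_infix _ ((List.singleton_infix_iff _ _).2 h)).trans_eq ?_
  rw [W_eq_blockWord, occ_blockWord_lb]
  exact List.count_eq_one_of_mem (List.nodup_finRange σ) (List.mem_finRange j)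

theorem occ_W_lt_of_lb_mem {S S' : List (Alph σ)} {j : Fin σ} (hS : 2 ≤ occ (W σ k) S)
    (h : lb σ j ∈ S') : occ (W σ k) S' < occ (W σ k) S :=
  (occ_W_le_one_of_lb_mem h).trans_lt hS

theorem occ_W_eq_zero_of_dol_cons_infix {S : List (Alph σ)} {y : Alph σ}
    (hy : ∀ j, y ≠ lb σ j) (h : [dol σ, y] <:+: S) : occ (W σ k) S = 0 :=
  Nat.eq_zero_of_le_zero ((occ_le_of_infix _ h).trans_eq (occ_blockWord_dol_cons hy _))

theorem maxRepeat_W_replicate (hσ : 2 ≤ σ) {i : ℕ} (hi : 1 ≤ i) (hik : i < k) :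
    MaxRepeat (W σ k) (replicate i (la σ)) := by
  have hocc : occ (W σ k) (replicate i (la σ)) = σ * (k + 1 - i) := occ_W_replicate hi
  have hocc_succ : occ (W σ k) (replicate (i + 1) (la σ)) = σ * (k + 1 - (i + 1)) :=
    occ_W_replicate (by omega)
  have htwice : σ * 2 ≤ σ * (k + 1 - i) := Nat.mul_le_mul_left σ (by omega)
  have hstep : σ * (k + 1 - (i + 1)) < σ * (k + 1 - i) :=
    Nat.mul_lt_mul_of_pos_left (by omega) (by omega)
  refine ⟨by omega, fun c => ?_⟩
  rcases eq_dol_or_eq_la_or_eq_lb c with rfl | rfl | ⟨j, rfl⟩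
  · have hleft : occ (W σ k) (dol σ :: replicate i (la σ)) = 0 := by
      obtain ⟨i, rfl⟩ := Nat.exists_eq_add_of_le' hi
      exact occ_W_eq_zero_of_dol_cons_infix la_ne_lb ⟨[], replicate i (la σ), rfl⟩
    rw [hleft, occ_W_replicate_append_dol, if_pos hik.le]
    omega
  · rw [← List.replicate_succ, ← List.replicate_succ', hocc_succ, hocc]
    exact ⟨hstep, hstep⟩
  · exact ⟨occ_W_lt_of_lb_mem (by omega) List.mem_cons_self,
      occ_W_lt_of_lb_mem (by omega) (List.mem_append_right _ (List.mem_singleton_self _))⟩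

theorem maxRepeat_W_replicate_append_dol (hσ : 2 ≤ σ) :
    MaxRepeat (W σ k) (replicate k (la σ) ++ [dol σ]) := by
  have hocc : occ (W σ k) (replicate k (la σ) ++ [dol σ]) = σ := by
    rw [occ_W_replicate_append_dol, if_pos le_rfl]
  refine ⟨by omega, fun c => ?_⟩
  rcases eq_dol_or_eq_la_or_eq_lb c with rfl | rfl | ⟨j, rfl⟩
  · have hleft : occ (W σ k) (dol σ :: (replicate k (la σ) ++ [dol σ])) = 0 := by
      cases k with
      | zero => exact occ_W_eq_zero_of_dol_cons_infix dol_ne_lb List.infix_rfl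
      | succ k => exact occ_W_eq_zero_of_dol_cons_infix la_ne_lb ⟨[], _, rfl⟩
    have hright : occ (W σ k) (replicate k (la σ) ++ [dol σ] ++ [dol σ]) = 0 :=
      occ_W_eq_zero_of_dol_cons_infix dol_ne_lb ⟨replicate k (la σ), [], by simp⟩
    rw [hleft, hright]
    omega
  · have hright : occ (W σ k) (replicate k (la σ) ++ [dol σ] ++ [la σ]) = 0 :=
      occ_W_eq_zero_of_dol_cons_infix la_ne_lb ⟨replicate k (la σ), [], by simp⟩
    rw [← List.cons_append, ← List.replicate_succ, occ_W_replicate_append_dol,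
      if_neg (by omega), hright]
    omega
  · exact ⟨occ_W_lt_of_lb_mem (by omega) List.mem_cons_self,
      occ_W_lt_of_lb_mem (by omega) (List.mem_append_right _ (List.mem_singleton_self _))⟩

theorem exists_eq_replicate_or_eq_replicate_append_dol_cons (S : List (Alph σ))
    (hS : ∀ j, lb σ j ∉ S) :
    ∃ i, S = replicate i (la σ) ∨ ∃ R, S = replicate i (la σ) ++ dol σ :: R := by
  induction S with
  | nil => exact ⟨0, Or.inl rfl⟩
  | cons x S ih =>
    rcases eq_dol_or_eq_la_or_eq_lb x with rfl | rfl | ⟨j, rfl⟩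
    · exact ⟨0, Or.inr ⟨S, rfl⟩⟩
    · obtain ⟨i, rfl | ⟨R, rfl⟩⟩ := ih fun j hj => hS j (List.mem_cons_of_mem _ hj)
      · exact ⟨i + 1, Or.inl rfl⟩
      · exact ⟨i + 1, Or.inr ⟨R, rfl⟩⟩
    · exact absurd List.mem_cons_self (hS j)

theorem eq_of_maxRepeat_W {S : List (Alph σ)} (h : MaxRepeat (W σ k) S) :
    S = [] ∨ (∃ i, 1 ≤ i ∧ i < k ∧ S = replicate i (la σ)) ∨
      S = replicate k (la σ) ++ [dol σ] := by
  obtain ⟨h2, hext⟩ := h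
  have hS : ∀ j, lb σ j ∉ S := fun j hj => by
    have := occ_W_le_one_of_lb_mem (k := k) hj
    omega
  obtain ⟨i, rfl | ⟨R, rfl⟩⟩ := exists_eq_replicate_or_eq_replicate_append_dol_cons S hS
  · rcases Nat.eq_zero_or_pos i with rfl | hi
    · exact Or.inl rfl
    refine Or.inr (Or.inl ⟨i, hi, ?_, rfl⟩)
    -- for `i ≥ k`, appending `$` does not lose any occurrence of `a^i`
    have hdol := (hext (dol σ)).2
    rw [occ_W_replicate_append_dol, occ_W_replicate hi] at hdol
    by_contra! hki
    obtain hzero | hone : k + 1 - i = 0 ∨ k + 1 - i = 1 := by omega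
    · rw [hzero, Nat.mul_zero] at hdol
      omega
    · rw [hone, Nat.mul_one, if_pos (by omega)] at hdol
      omega
  · cases R with
    | cons y R =>
      have hy : ∀ j, y ≠ lb σ j := fun j hj => hS j (by simp [hj])
      rw [occ_W_eq_zero_of_dol_cons_infix hy ⟨replicate i (la σ), R, by simp⟩] at h2
      omega
    | nil =>
      have hla := (hext (la σ)).1
      rw [← List.cons_append, ← List.replicate_succ, occ_W_replicate_append_dol,
        occ_W_replicate_append_dol] at hla
      rw [occ_W_replicate_append_dol] at h2
      obtain rfl : i = k := by split_ifs at h2 hla <;> omega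
      exact Or.inr (Or.inr rfl)

end OccurrencesInW

theorem maximal_repeats_W_general (σ k : ℕ) (hσ : 2 ≤ σ) (S : List (Alph σ)) :
    MaxRepeat (W σ k) S ↔
      S = [] ∨ (∃ i, 1 ≤ i ∧ i ≤ k - 1 ∧ S = List.replicate i (la σ)) ∨
      S = List.replicate k (la σ) ++ [dol σ] := by
  constructor
  · intro h
    rcases eq_of_maxRepeat_W h with hS | ⟨i, hi, hik, hS⟩ | hS
    · exact Or.inl hS
    · exact Or.inr (Or.inl ⟨i, hi, by omega, hS⟩)
    · exact Or.inr (Or.inr hS)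
  · rintro (rfl | ⟨i, hi, hik, rfl⟩ | rfl)
    · exact maxRepeat_nil (W_ne_nil (by omega))
    · exact maxRepeat_W_replicate hσ hi (by omega)
    · exact maxRepeat_W_replicate_append_dol hσ

/-- the maximal repeats of `T = b_1 a^k $ ⋯ b_σ a^k $` are exactly
`ε, a, aa, …, a^{k-1}, a^k $`. -/
theorem maximal_repeats_W (σ k : ℕ) (hσ : 2 ≤ σ) (hk : 2 ≤ k) (S : List (Alph σ)) :
    MaxRepeat (W σ k) S ↔
      S = [] ∨ (∃ i, 1 ≤ i ∧ i ≤ k - 1 ∧ S = List.replicate i (la σ)) ∨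
      S = List.replicate k (la σ) ++ [dol σ] :=
  maximal_repeats_W_general σ k hσ S
end

section
/- Let σ ≥ 2, k ≥ 2, and T = b_1 a^k $ b_2 a^k $ ⋯ b_σ a^k $ over σ+2 distinct letters. Then for each 1 ≤ i ≤ k−1, the maximal repeat a^i has exactly σ+1 left extensions (a, b_1, ..., b_σ) and exactly 2 right extensions ($ and a); the maximal repeat a^k $ has exactly σ left extensions (b_1, ..., b_σ) and exactly σ−1 right extensions (b_2, ..., b_σ); and the empty maximal repeat has exactly σ+2 left extensions and σ+2 right extensions. -/
open Finset

variable {α : Type*}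

section Ext15

variable {σ k : ℕ}

private def pat (σ k : ℕ) (j : Fin σ) (r : ℕ) : Alph σ :=
  if r = 0 then lb σ j else if r = k + 1 then dol σ else la σ

private lemma pat_eq_dol {j : Fin σ} {r : ℕ} : pat σ k j r = dol σ ↔ r = k + 1 := by
  unfold pat
  split_ifs with h1 h2
  · exact iff_of_false (by simp [lb, dol]) (by omega)
  · exact iff_of_true rfl h2
  · exact iff_of_false (by simp [la, dol]) h2

private lemma pat_eq_la {j : Fin σ} {r : ℕ} : pat σ k j r = la σ ↔ (r ≠ 0 ∧ r ≠ k + 1) := by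
  unfold pat
  split_ifs with h1 h2
  · exact iff_of_false (by simp [lb, la]) (by simp [h1])
  · exact iff_of_false (by simp [dol, la]) (by simp [h2])
  · exact iff_of_true rfl ⟨h1, h2⟩

private lemma pat_eq_lb {j j' : Fin σ} {r : ℕ} : pat σ k j r = lb σ j' ↔ r = 0 ∧ j = j' := by
  unfold pat
  split_ifs with h1 h2
  · simp [lb, h1]
  · exact iff_of_false (by simp [dol, lb]) (by simp [h1])
  · exact iff_of_false (by simp [la, lb]) (by simp [h1])

private lemma mod_succ (n : ℕ) :
    (n + 1) % (k + 2) = if n % (k + 2) = k + 1 then 0 else n % (k + 2) + 1 := by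
  have hpos : 0 < k + 2 := by omega
  have hlt : n % (k + 2) < k + 2 := Nat.mod_lt _ hpos
  rw [Nat.add_mod n 1, Nat.mod_eq_of_lt (show 1 < k + 2 by omega)]
  split_ifs with h
  · rw [h]; simp
  · exact Nat.mod_eq_of_lt (by omega)

private lemma flatMap_getElem? (L : List (Fin σ)) (n : ℕ) :
    (L.flatMap (fun j => lb σ j :: (List.replicate k (la σ) ++ [dol σ])))[n]? =
      (L[n / (k + 2)]?).map (fun j => pat σ k j (n % (k + 2))) := by
  induction L generalizing n with
  | nil => simp
  | cons j L ih =>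
    have hlen : (lb σ j :: (List.replicate k (la σ) ++ [dol σ])).length = k + 2 := by simp
    rw [List.flatMap_cons, List.getElem?_append, hlen]
    by_cases h : n < k + 2
    · rw [if_pos h]
      have hdiv : n / (k + 2) = 0 := Nat.div_eq_of_lt h
      have hmod : n % (k + 2) = n := Nat.mod_eq_of_lt h
      rw [hdiv, hmod, List.getElem?_cons_zero, Option.map_some]
      match n, h with
      | 0, _ => simp [pat]
      | (m + 1), h =>
        rw [List.getElem?_cons_succ, List.getElem?_append]
        unfold pat
        by_cases hm : m < k
        · rw [if_pos (by simpa using hm), List.getElem?_replicate, if_pos hm,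
            if_neg (by omega), if_neg (by omega)]
        · have hmk : m = k := by omega
          subst hmk
          rw [if_neg (by simp), if_neg (by omega), if_pos (by omega)]
          simp
    · rw [if_neg h, ih]
      have h1 : n / (k + 2) = (n - (k + 2)) / (k + 2) + 1 :=
        Nat.div_eq_sub_div (by omega) (by omega)
      have h2 : n % (k + 2) = (n - (k + 2)) % (k + 2) := Nat.mod_eq_sub_mod (by omega)
      rw [h1, h2, List.getElem?_cons_succ]

private lemma WgetElem (σ k n : ℕ) :
    (W σ k)[n]? = ((List.finRange σ)[n / (k + 2)]?).map (fun j => pat σ k j (n % (k + 2))) :=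
  flatMap_getElem? _ n

private lemma W_char (q r : ℕ) (hq : q < σ) (hr : r < k + 2) :
    (W σ k)[(k + 2) * q + r]? = some (pat σ k ⟨q, hq⟩ r) := by
  rw [WgetElem]
  have h1 : ((k + 2) * q + r) / (k + 2) = q := by
    rw [Nat.mul_add_div (by omega), Nat.div_eq_of_lt hr, Nat.add_zero]
  have h2 : ((k + 2) * q + r) % (k + 2) = r := by
    rw [Nat.mul_add_mod, Nat.mod_eq_of_lt hr]
  rw [h1, h2, List.getElem?_eq_getElem (by simpa using hq)]
  simp

private lemma W_cases {n : ℕ} {c : Alph σ} (h : (W σ k)[n]? = some c) :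
    ∃ (q : ℕ) (hq : q < σ) (r : ℕ), r < k + 2 ∧ n = (k + 2) * q + r ∧ c = pat σ k ⟨q, hq⟩ r := by
  rw [WgetElem] at h
  by_cases hq : n / (k + 2) < σ
  · refine ⟨n / (k + 2), hq, n % (k + 2), Nat.mod_lt _ (by omega),
      (Nat.div_add_mod n (k + 2)).symm, ?_⟩
    rw [List.getElem?_eq_getElem (by simpa using hq)] at h
    simp at h
    exact h.symm
  · rw [List.getElem?_eq_none (by simpa using hq)] at h
    simp at h

private lemma char_dol {n : ℕ} (h : (W σ k)[n]? = some (dol σ)) : n % (k + 2) = k + 1 := by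
  obtain ⟨q, hq, r, hr, rfl, hpat⟩ := W_cases h
  rw [Nat.mul_add_mod, Nat.mod_eq_of_lt hr]
  exact pat_eq_dol.mp hpat.symm

private lemma char_la {n : ℕ} (h : (W σ k)[n]? = some (la σ)) :
    1 ≤ n % (k + 2) ∧ n % (k + 2) ≤ k := by
  obtain ⟨q, hq, r, hr, rfl, hpat⟩ := W_cases h
  rw [Nat.mul_add_mod, Nat.mod_eq_of_lt hr]
  have := pat_eq_la.mp hpat.symm
  omega

private lemma char_lb {n : ℕ} {j : Fin σ} (h : (W σ k)[n]? = some (lb σ j)) :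
    n % (k + 2) = 0 ∧ n = (k + 2) * (j : ℕ) := by
  obtain ⟨q, hq, r, hr, rfl, hpat⟩ := W_cases h
  obtain ⟨hr0, hj⟩ := pat_eq_lb.mp hpat.symm
  subst hr0
  have hqj : q = (j : ℕ) := by rw [← hj]
  constructor
  · rw [Nat.mul_add_mod]; simp
  · rw [hqj, Nat.add_zero]

private lemma infix_iff_getElem {β : Type*} (u v : List β) :
    u <:+: v ↔ ∃ s, ∀ t, t < u.length → v[s + t]? = u[t]? := by
  constructor
  · rintro ⟨l1, l2, rfl⟩
    refine ⟨l1.length, fun t ht => ?_⟩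
    rw [List.append_assoc, List.getElem?_append, if_neg (by omega), Nat.add_sub_cancel_left,
      List.getElem?_append, if_pos ht]
  · rintro ⟨s, hs⟩
    have hu : u = (v.drop s).take u.length := by
      apply List.ext_getElem?
      intro t
      rw [List.getElem?_take]
      split
      · rw [List.getElem?_drop]
        exact (hs t ‹_›).symm
      · exact List.getElem?_eq_none (by omega)
    rw [hu]
    exact ((List.take_prefix _ _).isInfix).trans (List.drop_suffix s v).isInfix

private lemma rep_app_getElem (c : Alph σ) {i t : ℕ} (ht : t < i + 1) :
    (List.replicate i (la σ) ++ [c])[t]? = some (if t < i then la σ else c) := by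
  rw [List.getElem?_append]
  by_cases h : t < i
  · rw [if_pos (by simpa using h), List.getElem?_replicate, if_pos h, if_pos h]
  · have hti : t = i := by omega
    subst hti
    rw [if_neg (by simp), if_neg h]
    simp

private lemma cons_rep_getElem (c : Alph σ) {i t : ℕ} (ht : t < i + 1) :
    (c :: List.replicate i (la σ))[t]? = some (if t = 0 then c else la σ) := by
  cases t with
  | zero => simp
  | succ m =>
    rw [List.getElem?_cons_succ, List.getElem?_replicate, if_pos (by omega), if_neg (by omega)]

private lemma block_getElem (c : Alph σ) {t : ℕ} (ht : t < k + 2) :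
    (c :: (List.replicate k (la σ) ++ [dol σ]))[t]? =
      some (if t = 0 then c else if t < k + 1 then la σ else dol σ) := by
  cases t with
  | zero => simp
  | succ m =>
    rw [List.getElem?_cons_succ, rep_app_getElem (dol σ) (by omega)]
    by_cases h : m < k
    · rw [if_pos h, if_neg (by omega), if_pos (by omega)]
    · rw [if_neg h, if_neg (by omega), if_neg (by omega)]

private lemma rep_dol_c_getElem (c : Alph σ) {t : ℕ} (ht : t < k + 2) :
    ((List.replicate k (la σ) ++ [dol σ]) ++ [c])[t]? =
      some (if t < k then la σ else if t = k then dol σ else c) := by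
  rw [List.getElem?_append]
  by_cases h : t < k + 1
  · rw [if_pos (by simpa using h), rep_app_getElem (dol σ) (by omega)]
    by_cases h2 : t < k
    · rw [if_pos h2, if_pos h2]
    · rw [if_neg h2, if_neg h2, if_pos (by omega)]
  · have ht1 : t = k + 1 := by omega
    subst ht1
    rw [if_neg (by simp), if_neg (by omega), if_neg (by omega)]
    simp

end Ext15
/-- extensions of the maximal repeats of `T = b_1 a^k $ ⋯ b_σ a^k $`:
`a^i` (`1 ≤ i ≤ k-1`) has exactly the `σ+1` left extensions `a, b_1, …, b_σ` and the
`2` right extensions `$, a`; `a^k $` has exactly the `σ` left extensions `b_1, …, b_σ`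
and the `σ-1` right extensions `b_2, …, b_σ`; the empty repeat has all `σ+2` letters
as left and right extensions. -/
theorem extensions_W (σ k : ℕ) (hσ : 2 ≤ σ) (hk : 2 ≤ k) :
    (∀ i, 1 ≤ i → i ≤ k - 1 →
      (∀ c, (c :: List.replicate i (la σ)) <:+: W σ k ↔
        c = la σ ∨ ∃ j, c = lb σ j) ∧
      (∀ c, (List.replicate i (la σ) ++ [c]) <:+: W σ k ↔ c = dol σ ∨ c = la σ) ∧
      lext (W σ k) (List.replicate i (la σ)) = σ + 1 ∧
      rext (W σ k) (List.replicate i (la σ)) = 2) ∧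
    (∀ c, (c :: (List.replicate k (la σ) ++ [dol σ])) <:+: W σ k ↔ ∃ j, c = lb σ j) ∧
    (∀ c, ((List.replicate k (la σ) ++ [dol σ]) ++ [c]) <:+: W σ k ↔
      ∃ j : Fin σ, 1 ≤ (j : ℕ) ∧ c = lb σ j) ∧
    lext (W σ k) (List.replicate k (la σ) ++ [dol σ]) = σ ∧
    rext (W σ k) (List.replicate k (la σ) ++ [dol σ]) = σ - 1 ∧
    (∀ c : Alph σ, [c] <:+: W σ k) ∧
    lext (W σ k) ([] : List (Alph σ)) = σ + 2 ∧
    rext (W σ k) ([] : List (Alph σ)) = σ + 2 := by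
  have hσ0 : 0 < σ := by omega
  have hcard : Fintype.card (Alph σ) = σ + 2 := by
    simp only [Fintype.card_sum, Fintype.card_unit, Fintype.card_fin]; omega
  have hlbinj : Function.Injective (lb σ) := fun a b h => by simpa [lb] using h
  -- statement 3: c :: a^k $
  have h3 : ∀ c, (c :: (List.replicate k (la σ) ++ [dol σ])) <:+: W σ k ↔ ∃ j, c = lb σ j := by
    intro c
    rw [infix_iff_getElem]
    have hulen : (c :: (List.replicate k (la σ) ++ [dol σ])).length = k + 2 := by simp
    constructor
    · rintro ⟨s, hs⟩
      have h0 : (W σ k)[s]? = some c := by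
        have := hs 0 (by omega)
        rwa [Nat.add_zero, block_getElem c (by omega), if_pos rfl] at this
      have hrun : ∀ t, 1 ≤ t → t ≤ k → (W σ k)[s + t]? = some (la σ) := by
        intro t h1t h2t
        have := hs t (by omega)
        rwa [block_getElem c (by omega), if_neg (by omega), if_pos (by omega)] at this
      rcases c with ⟨⟩ | ⟨⟩ | j
      · -- c = dol: impossible
        exfalso
        have hd : s % (k + 2) = k + 1 := char_dol h0
        have ha := char_la (hrun 1 le_rfl (by omega))
        rw [mod_succ, if_pos hd] at ha
        omega
      · -- c = la: impossible
        exfalso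
        have ha := char_la h0
        set r := s % (k + 2) with hr
        have ht := char_la (hrun (k + 1 - r) (by omega) (by omega))
        have : (s + (k + 1 - r)) % (k + 2) = k + 1 := by
          rw [Nat.add_mod, ← hr, Nat.mod_eq_of_lt (show k + 1 - r < k + 2 by omega)]
          have : r + (k + 1 - r) = k + 1 := by omega
          rw [this, Nat.mod_eq_of_lt (by omega)]
        omega
      · exact ⟨j, rfl⟩
    · rintro ⟨j, rfl⟩
      refine ⟨(k + 2) * (j : ℕ), fun t ht => ?_⟩
      rw [hulen] at ht
      rw [W_char (j : ℕ) t j.isLt ht, block_getElem _ ht]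
      congr 1
      unfold pat
      split_ifs <;> first | rfl | omega
  -- statement 4: a^k $ ++ [c]
  have h4 : ∀ c, ((List.replicate k (la σ) ++ [dol σ]) ++ [c]) <:+: W σ k ↔
      ∃ j : Fin σ, 1 ≤ (j : ℕ) ∧ c = lb σ j := by
    intro c
    rw [infix_iff_getElem]
    have hulen : ((List.replicate k (la σ) ++ [dol σ]) ++ [c]).length = k + 2 := by simp
    constructor
    · rintro ⟨s, hs⟩
      have hd : (W σ k)[s + k]? = some (dol σ) := by
        have := hs k (by omega)
        rwa [rep_dol_c_getElem c (by omega), if_neg (by omega), if_pos rfl] at this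
      have hc : (W σ k)[s + k + 1]? = some c := by
        have := hs (k + 1) (by omega)
        rwa [rep_dol_c_getElem c (by omega), if_neg (by omega), if_neg (by omega),
          ← Nat.add_assoc] at this
      have hmod : (s + k + 1) % (k + 2) = 0 := by
        rw [mod_succ, if_pos (char_dol hd)]
      rcases c with ⟨⟩ | ⟨⟩ | j
      · exfalso; have := char_dol hc; omega
      · exfalso; have := char_la hc; omega
      · refine ⟨j, ?_, rfl⟩
        obtain ⟨-, heq⟩ := char_lb hc
        by_contra hj
        have hj0 : (j : ℕ) = 0 := by omega
        rw [hj0, Nat.mul_zero] at heq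
        omega
    · rintro ⟨j, hj1, rfl⟩
      have hjσ : (j : ℕ) - 1 < σ := by have := j.isLt; omega
      refine ⟨(k + 2) * ((j : ℕ) - 1) + 1, fun t ht => ?_⟩
      rw [hulen] at ht
      rw [rep_dol_c_getElem _ ht]
      by_cases htk : t < k + 1
      · rw [Nat.add_assoc, W_char ((j : ℕ) - 1) (1 + t) hjσ (by omega)]
        congr 1
        unfold pat
        split_ifs <;> first | rfl | omega
      · have ht1 : t = k + 1 := by omega
        subst ht1
        have hidx : (k + 2) * ((j : ℕ) - 1) + 1 + (k + 1) = (k + 2) * (j : ℕ) + 0 := by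
          have h2' : (k + 2) * ((j : ℕ) - 1 + 1) = (k + 2) * ((j : ℕ) - 1) + (k + 2) :=
            Nat.mul_succ _ _
          rw [show (j : ℕ) - 1 + 1 = (j : ℕ) by omega] at h2'
          omega
        rw [hidx, W_char (j : ℕ) 0 j.isLt (by omega)]
        rw [if_neg (by omega), if_neg (by omega), pat_eq_lb.mpr ⟨rfl, rfl⟩]
  -- singles
  have hsingle : ∀ c : Alph σ, [c] <:+: W σ k := by
    intro c
    rw [infix_iff_getElem]
    rcases c with ⟨⟩ | ⟨⟩ | j
    · refine ⟨k + 1, fun t ht => ?_⟩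
      simp only [List.length_singleton] at ht
      have ht0 : t = 0 := by omega
      subst ht0
      have hW := W_char (k := k) 0 (k + 1) hσ0 (by omega)
      rw [Nat.mul_zero, Nat.zero_add] at hW
      rw [Nat.add_zero, hW, pat_eq_dol.mpr rfl]
      rfl
    · refine ⟨1, fun t ht => ?_⟩
      simp only [List.length_singleton] at ht
      have ht0 : t = 0 := by omega
      subst ht0
      have hW := W_char (k := k) 0 1 hσ0 (by omega)
      rw [Nat.mul_zero, Nat.zero_add] at hW
      rw [Nat.add_zero, hW, pat_eq_la.mpr ⟨by omega, by omega⟩]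
      rfl
    · refine ⟨(k + 2) * (j : ℕ), fun t ht => ?_⟩
      simp only [List.length_singleton] at ht
      have ht0 : t = 0 := by omega
      subst ht0
      rw [W_char (j : ℕ) 0 j.isLt (by omega), pat_eq_lb.mpr ⟨rfl, rfl⟩]
      rfl
  refine ⟨?_, h3, h4, ?_, ?_, hsingle, ?_, ?_⟩
  · -- the a^i part
    intro i hi1 hi2
    have hik : i ≤ k - 1 := hi2
    have h1 : ∀ c, (c :: List.replicate i (la σ)) <:+: W σ k ↔
        c = la σ ∨ ∃ j, c = lb σ j := by
      intro c
      rw [infix_iff_getElem]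
      have hulen : (c :: List.replicate i (la σ)).length = i + 1 := by simp
      constructor
      · rintro ⟨s, hs⟩
        have h0 : (W σ k)[s]? = some c := by
          have := hs 0 (by omega)
          rwa [Nat.add_zero, cons_rep_getElem c (by omega), if_pos rfl] at this
        have ha : (W σ k)[s + 1]? = some (la σ) := by
          have := hs 1 (by omega)
          rwa [cons_rep_getElem c (by omega), if_neg (by omega)] at this
        rcases c with ⟨⟩ | ⟨⟩ | j
        · exfalso
          have hd : s % (k + 2) = k + 1 := char_dol h0
          have ha' := char_la ha
          rw [mod_succ, if_pos hd] at ha'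
          omega
        · exact Or.inl rfl
        · exact Or.inr ⟨j, rfl⟩
      · rintro (rfl | ⟨j, rfl⟩)
        · refine ⟨1, fun t ht => ?_⟩
          rw [hulen] at ht
          have h' := W_char (k := k) 0 (1 + t) hσ0 (by omega)
          rw [Nat.mul_zero, Nat.zero_add] at h'
          rw [h', cons_rep_getElem _ (by omega), pat_eq_la.mpr ⟨by omega, by omega⟩, ite_self]
        · refine ⟨(k + 2) * (j : ℕ), fun t ht => ?_⟩
          rw [hulen] at ht
          rw [W_char (j : ℕ) t j.isLt (by omega), cons_rep_getElem _ (by omega)]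
          congr 1
          unfold pat
          split_ifs <;> first | rfl | omega
    have h2 : ∀ c, (List.replicate i (la σ) ++ [c]) <:+: W σ k ↔ c = dol σ ∨ c = la σ := by
      intro c
      rw [infix_iff_getElem]
      have hulen : (List.replicate i (la σ) ++ [c]).length = i + 1 := by simp
      constructor
      · rintro ⟨s, hs⟩
        have hla : (W σ k)[s + (i - 1)]? = some (la σ) := by
          have := hs (i - 1) (by omega)
          rwa [rep_app_getElem c (by omega), if_pos (by omega)] at this
        have hc : (W σ k)[s + (i - 1) + 1]? = some c := by
          have := hs i (by omega)
          rwa [rep_app_getElem c (by omega), if_neg (by omega),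
            show s + i = s + (i - 1) + 1 by omega] at this
        have hm := char_la hla
        rcases c with ⟨⟩ | ⟨⟩ | j
        · exact Or.inl rfl
        · exact Or.inr rfl
        · exfalso
          obtain ⟨hz, -⟩ := char_lb hc
          rw [mod_succ, if_neg (by omega)] at hz
          omega
      · rintro (rfl | rfl)
        · refine ⟨k + 1 - i, fun t ht => ?_⟩
          rw [hulen] at ht
          have h' := W_char (k := k) 0 (k + 1 - i + t) hσ0 (by omega)
          rw [Nat.mul_zero, Nat.zero_add] at h'
          rw [h', rep_app_getElem _ ht]
          congr 1
          by_cases h2' : t < i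
          · rw [if_pos h2']
            exact pat_eq_la.mpr ⟨by omega, by omega⟩
          · rw [if_neg h2']
            exact pat_eq_dol.mpr (by omega)
        · refine ⟨1, fun t ht => ?_⟩
          rw [hulen] at ht
          have h' := W_char (k := k) 0 (1 + t) hσ0 (by omega)
          rw [Nat.mul_zero, Nat.zero_add] at h'
          rw [h', rep_app_getElem _ ht, pat_eq_la.mpr ⟨by omega, by omega⟩, ite_self]
    refine ⟨h1, h2, ?_, ?_⟩
    · unfold lext
      have hset : (Finset.univ.filter fun c : Alph σ => (c :: List.replicate i (la σ)) <:+: W σ k)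
          = Finset.univ.erase (dol σ) := by
        ext c
        simp only [Finset.mem_filter, Finset.mem_univ, true_and, Finset.mem_erase, and_true]
        rw [h1 c]
        rcases c with ⟨⟩ | ⟨⟩ | j <;> simp [dol, la, lb]
      rw [hset, Finset.card_erase_of_mem (Finset.mem_univ _), Finset.card_univ, hcard]
      omega
    · unfold rext
      have hset : (Finset.univ.filter fun c : Alph σ => (List.replicate i (la σ) ++ [c]) <:+: W σ k)
          = {dol σ, la σ} := by
        ext c
        simp only [Finset.mem_filter, Finset.mem_univ, true_and, Finset.mem_insert,
          Finset.mem_singleton]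
        exact h2 c
      rw [hset, Finset.card_insert_of_notMem (by simp [dol, la]), Finset.card_singleton]
  · -- lext a^k $ = σ
    unfold lext
    have hset : (Finset.univ.filter fun c : Alph σ =>
        (c :: (List.replicate k (la σ) ++ [dol σ])) <:+: W σ k) = Finset.univ.image (lb σ) := by
      ext c
      rw [Finset.mem_filter, Finset.mem_image, h3 c]
      constructor
      · rintro ⟨-, j, rfl⟩
        exact ⟨j, Finset.mem_univ _, rfl⟩
      · rintro ⟨j, -, rfl⟩
        exact ⟨Finset.mem_univ _, j, rfl⟩
    rw [hset, Finset.card_image_of_injective _ hlbinj, Finset.card_univ, Fintype.card_fin]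
  · -- rext a^k $ = σ - 1
    unfold rext
    have hset : (Finset.univ.filter fun c : Alph σ =>
        ((List.replicate k (la σ) ++ [dol σ]) ++ [c]) <:+: W σ k)
        = (Finset.univ.filter fun j : Fin σ => 1 ≤ (j : ℕ)).image (lb σ) := by
      ext c
      rw [Finset.mem_filter, Finset.mem_image, h4 c]
      constructor
      · rintro ⟨-, j, hj, rfl⟩
        exact ⟨j, Finset.mem_filter.mpr ⟨Finset.mem_univ _, hj⟩, rfl⟩
      · rintro ⟨j, hj, rfl⟩
        exact ⟨Finset.mem_univ _, j, (Finset.mem_filter.mp hj).2, rfl⟩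
    rw [hset, Finset.card_image_of_injective _ hlbinj]
    have hset2 : (Finset.univ.filter fun j : Fin σ => 1 ≤ (j : ℕ))
        = Finset.univ.erase ⟨0, hσ0⟩ := by
      ext j
      simp only [Finset.mem_filter, Finset.mem_univ, true_and, Finset.mem_erase, and_true]
      simp only [ne_eq, Fin.ext_iff, Fin.val_mk]
      omega
    rw [hset2, Finset.card_erase_of_mem (Finset.mem_univ _), Finset.card_univ, Fintype.card_fin]
  · -- lext [] = σ + 2
    unfold lext
    rw [Finset.filter_true_of_mem (fun c _ => hsingle c), Finset.card_univ, hcard]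
  · -- rext [] = σ + 2
    unfold rext
    rw [Finset.filter_true_of_mem (fun c _ => by simpa using hsingle c), Finset.card_univ, hcard]
end
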